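/- arXiv:2210.07831 — 10 statements merged into one kernel-verified Lean document; each statement's English description precedes it below -/
import Mathlib

section
/- There exists a finite colouring Φ of the set ℕ^(2) = {(a,b) ∈ ℕ × ℕ : a < b} (i.e. a function Φ : ℕ^(2) → Fin r for some r ∈ ℕ) such that there do not exist two strictly increasing sequences of natural numbers (a_n)_{n≥1} and (b_n)_{n≥1} with a_i < b_i for every i for which the set {(a_n + a_m, b_n + b_m) : n < m} ∪ {(a_n, b_m) : n < m} is monochromatic under Φ. -/
/-!
Colour `(x, y)` by whether `v₂(y) < x`, by the parity of `v₂(y)` and by the odd part of `y`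
modulo `4`, and suppose the configuration were monochromatic.

If `v₂(y) < x` on it, then `v₂(b_m) < a_0` for all `m ≥ 1`, so two terms `b_i`, `b_j` share the
valuation `u`, and their odd parts agree modulo `4`. The odd parts then add up to twice an odd
number, so `v₂(b_i + b_j) = u + 1`, contradicting the constant parity of the valuation.

Otherwise `2 ^ (a_n + a_m)` divides `b_n + b_m` whenever `n < m`, so `2 ^ a_m` divides
`b_1 - b_0 ≠ 0` for every `m`, which is impossible as `a_m → ∞`.
-/

lemma padicValNat_two_pow_mul_of_odd (k : ℕ) {m : ℕ} (hm : Odd m) :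
    padicValNat 2 (2 ^ k * m) = k := by
  rw [padicValNat.mul (by positivity) (by rintro rfl; simp at hm), padicValNat.prime_pow,
    padicValNat.eq_zero_of_not_dvd hm.not_two_dvd_nat, add_zero]

lemma div_two_pow_padicValNat_two_pow_mul_of_odd (k : ℕ) {m : ℕ} (hm : Odd m) :
    2 ^ k * m / 2 ^ padicValNat 2 (2 ^ k * m) = m := by
  rw [padicValNat_two_pow_mul_of_odd k hm, Nat.mul_div_cancel_left _ (by positivity)]

lemma padicValNat_two_add_eq_succ {x y : ℕ} (hx : x ≠ 0) (hy : y ≠ 0)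
    (hv : padicValNat 2 x = padicValNat 2 y)
    (hodd : (↑(x / 2 ^ padicValNat 2 x) : ZMod 4) = ↑(y / 2 ^ padicValNat 2 y)) :
    padicValNat 2 (x + y) = padicValNat 2 x + 1 := by
  obtain ⟨k, m, hm, rfl⟩ := Nat.exists_eq_two_pow_mul_odd hx
  obtain ⟨k', m', hm', rfl⟩ := Nat.exists_eq_two_pow_mul_odd hy
  rw [padicValNat_two_pow_mul_of_odd _ hm, padicValNat_two_pow_mul_of_odd _ hm'] at hv
  subst hv
  rw [div_two_pow_padicValNat_two_pow_mul_of_odd _ hm,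
    div_two_pow_padicValNat_two_pow_mul_of_odd _ hm', ZMod.natCast_eq_natCast_iff'] at hodd
  have hm2 := Nat.odd_iff.mp hm
  have hm'2 := Nat.odd_iff.mp hm'
  obtain ⟨q, hq⟩ : ∃ q, m + m' = 2 * (2 * q + 1) := ⟨(m + m') / 4, by omega⟩
  have hsum : 2 ^ k * m + 2 ^ k * m' = 2 ^ (k + 1) * (2 * q + 1) := by
    rw [← mul_add, hq, pow_succ, mul_assoc]
  rw [hsum, padicValNat_two_pow_mul_of_odd _ (odd_two_mul_add_one q),
    padicValNat_two_pow_mul_of_odd _ hm]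

lemma not_forall_le_padicValNat_add {p : ℕ} (hp : 1 < p) {a b : ℕ → ℕ} (ha : StrictMono a)
    (hb : StrictMono b) : ¬ ∀ n m, n < m → a m ≤ padicValNat p (b n + b m) := by
  intro h
  set m := b 1 + 2
  have hdvd : ∀ n < m, p ^ a m ∣ b n + b m := fun n hn =>
    (pow_dvd_pow p (h n m hn)).trans pow_padicValNat_dvd
  have hdiff : p ^ a m ∣ b 1 - b 0 := by
    simpa only [Nat.add_sub_add_right] using Nat.dvd_sub (hdvd 1 (by omega)) (hdvd 0 (by omega))
  have hsmall : b 1 - b 0 < p ^ a m :=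
    calc b 1 - b 0 ≤ b 1 := Nat.sub_le _ _
      _ < p ^ b 1 := Nat.lt_pow_self hp
      _ ≤ p ^ a m := Nat.pow_le_pow_right (by omega) ((by omega : b 1 ≤ m).trans (ha.id_le m))
  have := Nat.eq_zero_of_dvd_of_lt hdiff hsmall
  have := hb zero_lt_one
  omega

def colour (p : ℕ × ℕ) : Bool × ZMod 2 × ZMod 4 :=
  (decide (padicValNat 2 p.2 < p.1), padicValNat 2 p.2, ↑(p.2 / 2 ^ padicValNat 2 p.2))

theorem not_monochromatic_colour {a b : ℕ → ℕ} {c : Bool × ZMod 2 × ZMod 4}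
    (ha : StrictMono a) (hb : StrictMono b) (hab : ∀ i, a i < b i)
    (H : ∀ n m, n < m → colour (a n + a m, b n + b m) = c ∧ colour (a n, b m) = c) : False := by
  obtain ⟨t, e, o⟩ := c
  simp only [colour, Prod.mk.injEq] at H
  cases t
  · refine not_forall_le_padicValNat_add one_lt_two ha hb fun n m hnm => ?_
    have := (H n m hnm).1.1
    simp only [decide_eq_false_iff_not, not_lt] at this
    omega
  · have hval : Set.MapsTo (fun m => padicValNat 2 (b m)) (Set.Ici 1) (Set.Iio (a 0)) :=
      fun m hm => by simpa using (H 0 m hm).2.1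
    obtain ⟨i, hi, j, hj, hij, hv⟩ :=
      (Set.Ici_infinite 1).exists_lt_map_eq_of_mapsTo hval (Set.finite_Iio _)
    have hb0 : ∀ k, b k ≠ 0 := fun k => by have := hab k; omega
    have hsum := padicValNat_two_add_eq_succ (hb0 i) (hb0 j) hv
      ((H 0 i hi).2.2.2.trans (H 0 j hj).2.2.2.symm)
    have hpar := (H i j hij).1.2.1.trans (H 0 i hi).2.2.1.symm
    rw [hsum, Nat.cast_succ, add_eq_left] at hpar
    exact one_ne_zero hpar

/-- There exists a finite colouring `Φ` of `ℕ^(2) = {(a,b) : 0 < a < b}` such that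
there do not exist strictly increasing sequences `(a_n)`, `(b_n)` of positive integers
with `a_i < b_i` for all `i`, for which the set
`{(a_n + a_m, b_n + b_m) : n < m} ∪ {(a_n, b_m) : n < m}` is monochromatic. -/
theorem stmt_0 :
    ∃ (r : ℕ) (Φ : ℕ × ℕ → Fin r),
      ¬ ∃ (a b : ℕ → ℕ) (c : Fin r),
        StrictMono a ∧ StrictMono b ∧ (∀ i, 0 < a i) ∧ (∀ i, a i < b i) ∧
        (∀ n m, n < m →
          Φ (a n + a m, b n + b m) = c ∧ Φ (a n, b m) = c) := by
  refine ⟨_, Fintype.equivFin _ ∘ colour, ?_⟩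
  rintro ⟨a, b, c, ha, hb, -, hab, H⟩
  refine not_monochromatic_colour (c := (Fintype.equivFin _).symm c) ha hb hab fun n m hnm => ?_
  simpa only [Function.comp_apply, Equiv.eq_symm_apply] using H n m hnm
end

section
/- There exists a finite colouring Ψ of the set ℕ^(2) = {(a,b) ∈ ℕ × ℕ : a < b} (i.e. a function Ψ : ℕ^(2) → Fin r for some r ∈ ℕ) such that there do not exist two strictly increasing sequences of natural numbers (a_n)_{n≥1} and (b_n)_{n≥1} with a_i < b_i for every i for which the set {(a_n + a_m + 1, b_n + b_m) : n < m} ∪ {(a_n, b_m) : n < m} is monochromatic under Ψ. -/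
/-!
Colour `(x, y)` by whether `2 ^ x ∣ y` and by the parity of the `2`-adic valuation of `y`.

If the common colour has `2 ^ x ∣ y`, then `2 ^ (a n + a m + 1) ∣ b n + b m` for all `n < m`,
so `b 0` and `b 1` are congruent modulo `2 ^ a m` for every large `m`, hence equal. Otherwise
`2 ^ a 0 ∤ b m` for all `m ≥ 1`; by pigeonhole two of these `b i, b j` agree modulo
`2 ^ (a 0 + 1)`, which forces `v₂ (b i + b j) = v₂ (b i) + 1`, so the pairs `(a 0, b i)` and
`(a i + a j + 1, b i + b j)` get different parities.
-/

lemma not_forall_pow_dvd_add {q : ℕ} (hq : 1 < q) {a b : ℕ → ℕ} (ha : StrictMono a)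
    (hb : StrictMono b) : ¬ ∀ n m, n < m → q ^ a m ∣ b n + b m := by
  intro h
  set m := b 1 + 2
  have hmod : b 0 ≡ b 1 [MOD q ^ a m] :=
    Nat.ModEq.add_right_cancel' (b m) <|
      ((Nat.modEq_zero_iff_dvd.2 (h 0 m (by omega))).trans
        (Nat.modEq_zero_iff_dvd.2 (h 1 m (by omega))).symm)
  have hlt : b 1 < q ^ a m :=
    calc b 1 < m := by omega
      _ ≤ a m := ha.le_apply
      _ < q ^ a m := Nat.lt_pow_self hq
  exact (hb one_pos).ne (hmod.eq_of_lt_of_lt ((hb one_pos).trans hlt) hlt)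

lemma padicValNat_two_add_of_modEq {x y : ℕ} (hx : x ≠ 0)
    (h : x ≡ y [MOD 2 ^ (padicValNat 2 x + 2)]) :
    padicValNat 2 (x + y) = padicValNat 2 x + 1 := by
  set w := padicValNat 2 x
  have hsum : x + y ≡ 2 * x [MOD 2 ^ (w + 2)] := by
    rw [two_mul]; exact Nat.ModEq.add_left x h.symm
  have hdvd : 2 ^ (w + 1) ∣ x + y := by
    have h2x : 2 ^ (w + 1) ∣ 2 * x := by
      rw [pow_succ']; exact mul_dvd_mul_left 2 pow_padicValNat_dvd
    exact ((hsum.of_dvd (pow_dvd_pow 2 (by omega))).dvd_iff dvd_rfl).2 h2x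
  have hndvd : ¬ 2 ^ (w + 2) ∣ x + y := by
    intro hd
    have h2x : 2 * 2 ^ (w + 1) ∣ 2 * x := by
      rw [← pow_succ']; exact (hsum.dvd_iff dvd_rfl).1 hd
    exact pow_succ_padicValNat_not_dvd hx (Nat.dvd_of_mul_dvd_mul_left two_pos h2x)
  have hxy : x + y ≠ 0 := by omega
  have hle := (padicValNat_dvd_iff_le hxy).1 hdvd
  have hlt := mt (padicValNat_dvd_iff_le hxy).2 hndvd
  omega

lemma exists_padicValNat_two_add_eq_succ {b : ℕ → ℕ} {k : ℕ}
    (h : ∀ m, 0 < m → ¬ 2 ^ k ∣ b m) :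
    ∃ i j, 0 < i ∧ i < j ∧ padicValNat 2 (b i + b j) = padicValNat 2 (b i) + 1 := by
  obtain ⟨i, hi, j, hj, hij, hmod⟩ :=
    (Set.Ioi_infinite 0).exists_lt_map_eq_of_mapsTo
      (f := fun m => b m % 2 ^ (k + 1)) (t := Set.Iio (2 ^ (k + 1)))
      (fun m _ => Nat.mod_lt _ (by positivity)) (Set.finite_Iio _)
  have hbi : b i ≠ 0 := fun h0 => h i hi (h0 ▸ dvd_zero _)
  have hval : padicValNat 2 (b i) < k := by
    by_contra! hk
    exact h i hi ((pow_dvd_pow 2 hk).trans pow_padicValNat_dvd)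
  refine ⟨i, j, hi, hij, padicValNat_two_add_of_modEq hbi ?_⟩
  exact Nat.ModEq.of_dvd (pow_dvd_pow 2 (by omega)) hmod

def twoAdicColour (p : ℕ × ℕ) : Bool × Bool :=
  (decide (2 ^ p.1 ∣ p.2), decide (Even (padicValNat 2 p.2)))

lemma twoAdicColour_eq_iff {p p' : ℕ × ℕ} :
    twoAdicColour p = twoAdicColour p' ↔
      ((2 ^ p.1 ∣ p.2 ↔ 2 ^ p'.1 ∣ p'.2) ∧
        (Even (padicValNat 2 p.2) ↔ Even (padicValNat 2 p'.2))) := by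
  simp only [twoAdicColour, Prod.ext_iff, decide_eq_decide]

/-- There exists a finite colouring `Ψ` of `ℕ^(2)` such that there do not exist
strictly increasing sequences `(a_n)`, `(b_n)` of positive integers with `a_i < b_i`
for all `i`, for which `{(a_n + a_m + 1, b_n + b_m) : n < m} ∪ {(a_n, b_m) : n < m}`
is monochromatic. -/
theorem stmt_1 :
    ∃ (r : ℕ) (Ψ : ℕ × ℕ → Fin r),
      ¬ ∃ (a b : ℕ → ℕ) (c : Fin r),
        StrictMono a ∧ StrictMono b ∧ (∀ i, 0 < a i) ∧ (∀ i, a i < b i) ∧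
        (∀ n m, n < m →
          Ψ (a n + a m + 1, b n + b m) = c ∧ Ψ (a n, b m) = c) := by
  refine ⟨_, Fintype.equivFin _ ∘ twoAdicColour, ?_⟩
  rintro ⟨a, b, c, ha, hb, -, -, hmono⟩
  have hsame : ∀ n m n' m', n < m → n' < m' →
      twoAdicColour (a n + a m + 1, b n + b m) = twoAdicColour (a n', b m') :=
    fun n m n' m' h h' =>
      (Fintype.equivFin _).injective ((hmono n m h).1.trans (hmono n' m' h').2.symm)
  by_cases hd : 2 ^ a 0 ∣ b 1
  · refine not_forall_pow_dvd_add one_lt_two ha hb fun n m hnm => ?_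
    have hdvd := (twoAdicColour_eq_iff.1 (hsame n m 0 1 hnm one_pos)).1.2 hd
    exact (pow_dvd_pow 2 (by omega)).trans hdvd
  · obtain ⟨i, j, hi, hij, hval⟩ := exists_padicValNat_two_add_eq_succ
      fun m hm hdm => hd ((twoAdicColour_eq_iff.1
        ((hsame 0 1 0 m one_pos hm).symm.trans (hsame 0 1 0 1 one_pos one_pos))).1.1 hdm)
    have hpar := (twoAdicColour_eq_iff.1 (hsame i j 0 i hij hi)).2
    rw [hval, Nat.even_add_one] at hpar
    exact iff_not_self hpar.symm
end

section
/- There exists a finite colouring Ψ' of the set ℕ^(2) = {(a,b) ∈ ℕ × ℕ : a < b} (i.e. a function Ψ' : ℕ^(2) → Fin r for some r ∈ ℕ) such that there do not exist two strictly increasing sequences of natural numbers (a_n)_{n≥1} and (b_n)_{n≥1} with a_i < b_i for every i ≥ 1 for which the set {(a_n + a_m − 1, b_n + b_m) : n < m} ∪ {(a_n, b_m) : n < m} is monochromatic under Ψ'. -/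
/-!
Colour `(x, y)` by whether `x ≤ v₂(y)` and by the parity of `v₂(y)`.

If the first bit is set on the whole pattern, then `v₂(b₀ + bₘ)` and `v₂(b₁ + bₘ)` are at least
`aₘ - 1`, which tends to infinity, so `b₀ ≡ b₁` modulo arbitrarily large powers of `2`, i.e.
`b₀ = b₁`.

If it is not set, then `v₂(bₘ) < a₀` for all `m ≥ 1`. By pigeonhole there are `u < w` with
`b_u ≡ b_w (mod 2^(a₀+1))`; then `b_u + b_w ≡ 2 b_w`, so `v₂(b_u + b_w) = v₂(b_w) + 1`, whose
parity differs from that of `v₂(b_w)`, although the pattern forces the two parities to agree.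
-/

theorem padicValNat_eq_of_modEq {p x y k : ℕ} [Fact p.Prime] (hx : x ≠ 0)
    (hxk : padicValNat p x < k) (h : x ≡ y [MOD p ^ k]) :
    padicValNat p y = padicValNat p x := by
  have hdvd {j : ℕ} (hj : j ≤ k) : p ^ j ∣ x ↔ p ^ j ∣ y := h.dvd_iff (pow_dvd_pow p hj)
  have hy : y ≠ 0 := by
    rintro rfl
    have := (padicValNat_dvd_iff_le hx).mp (Nat.modEq_zero_iff_dvd.mp h)
    omega
  apply le_antisymm
  · by_contra! hlt
    have : p ^ (padicValNat p x + 1) ∣ y := (pow_dvd_pow p hlt).trans pow_padicValNat_dvd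
    exact pow_succ_padicValNat_not_dvd hx ((hdvd hxk).mpr this)
  · exact (padicValNat_dvd_iff_le hy).mp ((hdvd hxk.le).mp pow_padicValNat_dvd)

theorem padicValNat_self_mul {p n : ℕ} [hp : Fact p.Prime] (hn : n ≠ 0) :
    padicValNat p (p * n) = padicValNat p n + 1 := by
  rw [padicValNat.mul hp.out.ne_zero hn, padicValNat_self, add_comm]

def valuationColouring (p : ℕ × ℕ) : Bool × Bool :=
  (decide (p.1 ≤ padicValNat 2 p.2), (padicValNat 2 p.2).bodd)

variable {a b : ℕ → ℕ}

theorem not_forall_le_padicValNat_two_add (ha : StrictMono a) (hb : StrictMono b) :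
    ¬ ∀ n m, n < m → a n + a m - 1 ≤ padicValNat 2 (b n + b m) := by
  intro h
  set k := a (b 1 + 2) - 1
  have hdvd (n : ℕ) (hn : n < b 1 + 2) : b n + b (b 1 + 2) ≡ 0 [MOD 2 ^ k] :=
    Nat.modEq_zero_iff_dvd.mpr <|
      (pow_dvd_pow 2 (by have := h n _ hn; omega)).trans pow_padicValNat_dvd
  have hmod : b 0 ≡ b 1 [MOD 2 ^ k] :=
    Nat.ModEq.add_right_cancel' _ ((hdvd 0 (by omega)).trans (hdvd 1 (by omega)).symm)
  have hk : b 1 < 2 ^ k := by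
    have := ha.id_le (b 1 + 2)
    calc b 1 < 2 ^ b 1 := Nat.lt_two_pow_self
      _ ≤ 2 ^ k := Nat.pow_le_pow_right two_pos (by simp only [id] at this; omega)
  exact (hb zero_lt_one).ne (hmod.eq_of_lt_of_lt ((hb zero_lt_one).trans hk) hk)

theorem not_forall_padicValNat_two_lt_and_bodd_eq (hb : StrictMono b) :
    ¬ ∀ n m, n < m → padicValNat 2 (b m) < a n ∧
      (padicValNat 2 (b n + b m)).bodd = (padicValNat 2 (b m)).bodd := by
  intro h
  obtain ⟨u, w, huw, hmod⟩ := Set.Finite.exists_lt_map_eq_of_forall_mem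
    (f := fun m => b m % 2 ^ (a 0 + 1)) (fun m => Nat.mod_lt _ (by positivity))
    (Set.finite_Iio (2 ^ (a 0 + 1)))
  have hw : b w ≠ 0 := (hb (pos_of_gt huw)).ne_bot
  have hval : padicValNat 2 (b u + b w) = padicValNat 2 (b w) + 1 := by
    rw [← padicValNat_self_mul hw]
    refine padicValNat_eq_of_modEq (k := a 0 + 1) (by omega) ?_ ?_
    · rw [padicValNat_self_mul hw]
      have := (h 0 w (pos_of_gt huw)).1
      omega
    · rw [two_mul]
      exact Nat.ModEq.add_right _ hmod.symm
  have := (h u w huw).2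
  rw [hval, Nat.bodd_succ] at this
  exact Bool.not_ne_self _ this

theorem valuationColouring_not_monochromatic (ha : StrictMono a) (hb : StrictMono b)
    (c : Bool × Bool) :
    ¬ ∀ n m, n < m → valuationColouring (a n + a m - 1, b n + b m) = c ∧
      valuationColouring (a n, b m) = c := by
  obtain ⟨_ | _, parity⟩ := c
  · refine fun h => not_forall_padicValNat_two_lt_and_bodd_eq (a := a) hb fun n m hnm => ?_
    obtain ⟨hsum, hpair⟩ := h n m hnm
    simp only [valuationColouring, Prod.mk.injEq, decide_eq_false_iff_not, not_le] at hsum hpair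
    exact ⟨hpair.1, hsum.2.trans hpair.2.symm⟩
  · refine fun h => not_forall_le_padicValNat_two_add ha hb fun n m hnm => ?_
    have := (h n m hnm).1
    simp only [valuationColouring, Prod.mk.injEq, decide_eq_true_eq] at this
    exact this.1

/-- There exists a finite colouring `Ψ'` of `ℕ^(2)` such that there do not exist
strictly increasing sequences `(a_n)`, `(b_n)` of positive integers with `a_i < b_i`
for all `i`, for which `{(a_n + a_m - 1, b_n + b_m) : n < m} ∪ {(a_n, b_m) : n < m}`
is monochromatic. -/
theorem stmt_2 :
    ∃ (r : ℕ) (Ψ' : ℕ × ℕ → Fin r),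
      ¬ ∃ (a b : ℕ → ℕ) (c : Fin r),
        StrictMono a ∧ StrictMono b ∧ (∀ i, 0 < a i) ∧ (∀ i, a i < b i) ∧
        (∀ n m, n < m →
          Ψ' (a n + a m - 1, b n + b m) = c ∧ Ψ' (a n, b m) = c) := by
  let e := Fintype.equivFin (Bool × Bool)
  refine ⟨_, e ∘ valuationColouring, ?_⟩
  rintro ⟨a, b, c, ha, hb, -, -, h⟩
  refine valuationColouring_not_monochromatic ha hb (e.symm c) fun n m hnm => ?_
  simpa only [Function.comp_apply, ← e.eq_symm_apply] using h n m hnm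
end

section
/- There exists a function φ : ℤ → {0,1} such that φ(k+1) ≠ φ(2k) and φ(k+1) ≠ φ(2k+1) for every integer k with k ∉ {0,1}, and moreover φ(0) ≠ φ(1) and φ(2) ≠ φ(3). -/
def myphi : ℤ → Fin 2 := fun n =>
  if _h : n.natAbs ≤ 4 then
    (if n = -4 then 0 else if n = -3 then 0 else if n = -2 then 1 else if n = -1 then 1
     else if n = 0 then 0 else if n = 1 then 1 else if n = 2 then 0 else if n = 3 then 1 else 0)
  else 1 - myphi (n / 2 + 1)
termination_by n => n.natAbs
decreasing_by omega

lemma myphi_rec (n : ℤ) (h : 4 < n.natAbs) : myphi n = 1 - myphi (n / 2 + 1) := by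
  rw [myphi]; simp [Nat.not_le.mpr h]

lemma fin2_sub_ne (x : Fin 2) : (1 : Fin 2) - x ≠ x := by fin_cases x <;> decide

/-- There exists `φ : ℤ → {0,1}` such that `φ(k+1) ≠ φ(2k)` and `φ(k+1) ≠ φ(2k+1)`
for all integers `k ∉ {0,1}`, and moreover `φ(0) ≠ φ(1)` and `φ(2) ≠ φ(3)`. -/
theorem stmt_3 :
    ∃ φ : ℤ → Fin 2,
      (∀ k : ℤ, k ≠ 0 → k ≠ 1 → φ (k + 1) ≠ φ (2 * k) ∧ φ (k + 1) ≠ φ (2 * k + 1)) ∧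
      φ 0 ≠ φ 1 ∧ φ 2 ≠ φ 3 := by
  have hm4 : myphi (-4) = 0 := by rw [myphi]; norm_num
  have hm3 : myphi (-3) = 0 := by rw [myphi]; norm_num
  have hm2 : myphi (-2) = 1 := by rw [myphi]; norm_num
  have hm1 : myphi (-1) = 1 := by rw [myphi]; norm_num
  have h0 : myphi 0 = 0 := by rw [myphi]; norm_num
  have h1 : myphi 1 = 1 := by rw [myphi]; norm_num
  have h2 : myphi 2 = 0 := by rw [myphi]; norm_num
  have h3 : myphi 3 = 1 := by rw [myphi]; norm_num
  have h4 : myphi 4 = 0 := by rw [myphi]; norm_num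
  refine ⟨myphi, ?_, by rw [h0, h1]; decide, by rw [h2, h3]; decide⟩
  intro k hk0 hk1
  rcases eq_or_ne k (-1) with rfl | hkm1
  · constructor <;> simp [hm2, hm1, h0]
  rcases eq_or_ne k (-2) with rfl | hkm2
  · constructor <;> simp [hm4, hm3, hm1]
  rcases eq_or_ne k 2 with rfl | hk2
  · have h5 : myphi 5 = 1 - myphi 3 := by
      have := myphi_rec 5 (by norm_num)
      rwa [show (5:ℤ) / 2 + 1 = 3 by decide] at this
    constructor
    · rw [show (2:ℤ)+1 = 3 by ring, show (2:ℤ)*2 = 4 by ring, h3, h4]; decide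
    · rw [show (2:ℤ)+1 = 3 by ring, show (2:ℤ)*2+1 = 5 by ring, h5]
      exact (fin2_sub_ne _).symm
  -- now |k| ≥ 3
  have hk : 3 ≤ k ∨ k ≤ -3 := by omega
  have e1 : (2*k) / 2 + 1 = k + 1 := by omega
  have e2 : (2*k+1) / 2 + 1 = k + 1 := by omega
  have r1 : myphi (2*k) = 1 - myphi (k+1) := by
    rw [myphi_rec (2*k) (by omega), e1]
  have r2 : myphi (2*k+1) = 1 - myphi (k+1) := by
    rw [myphi_rec (2*k+1) (by omega), e2]
  rw [r1, r2]
  exact ⟨(fin2_sub_ne _).symm, (fin2_sub_ne _).symm⟩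
end

section
/- There exists a finite colouring ν of the positive reals ℝ⁺ (i.e. a function ν : ℝ⁺ → Fin r for some r ∈ ℕ) such that there is no injective sequence (x_n)_{n≥1} of positive reals which is bounded above and bounded away from zero (i.e. there exist real numbers 0 < c ≤ C with c ≤ x_n ≤ C for all n) and for which all the numbers x_n + x_m and x_n · x_m, for all pairs 1 ≤ n < m, have the same colour under ν. -/
open Real Filter Topology

noncomputable def wfun (u : ℝ) : ℝ := Real.log (u / 4) / Real.log 2

noncomputable def nucol (u : ℝ) : Fin 4 :=
  if 0 < u ∧ u ≠ 4 then
    ⟨(⌊Real.logb (3/2) |wfun u|⌋ % 3).toNat, by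
      have h1 : 0 ≤ ⌊Real.logb (3/2) |wfun u|⌋ % 3 := Int.emod_nonneg _ (by norm_num)
      have h2 : ⌊Real.logb (3/2) |wfun u|⌋ % 3 < 3 := Int.emod_lt_of_pos _ (by norm_num)
      omega⟩
  else 3

lemma wfun_ne_zero {u : ℝ} (hu : 0 < u) (hu4 : u ≠ 4) : wfun u ≠ 0 := by
  have h1 : Real.log (u / 4) ≠ 0 :=
    Real.log_ne_zero_of_pos_of_ne_one (by positivity) (by
      intro h
      exact hu4 (by linarith [(div_eq_one_iff_eq (by norm_num : (4:ℝ) ≠ 0)).1 h]))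
  have h2 : Real.log 2 ≠ 0 := Real.log_ne_zero_of_pos_of_ne_one (by norm_num) (by norm_num)
  exact div_ne_zero h1 h2

lemma key {u v : ℝ} (hu : 0 < u) (hu4 : u ≠ 4) (hv : 0 < v) (hv4 : v ≠ 4)
    (hcol : nucol u = nucol v) (h1 : 3/2 * |wfun u| ≤ |wfun v|)
    (h2 : |wfun v| ≤ 9/4 * |wfun u|) : False := by
  have ht1 : (0:ℝ) < |wfun u| := abs_pos.2 (wfun_ne_zero hu hu4)
  have ht2 : (0:ℝ) < |wfun v| := abs_pos.2 (wfun_ne_zero hv hv4)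
  set t1 := |wfun u| with hht1
  set t2 := |wfun v| with hht2
  have hb : (1:ℝ) < 3/2 := by norm_num
  -- extract mod-3 equality
  rw [nucol, nucol, if_pos ⟨hu, hu4⟩, if_pos ⟨hv, hv4⟩] at hcol
  have hmod : ⌊Real.logb (3/2) t1⌋ % 3 = ⌊Real.logb (3/2) t2⌋ % 3 := by
    have h1' : 0 ≤ ⌊Real.logb (3/2) t1⌋ % 3 := Int.emod_nonneg _ (by norm_num)
    have h2' : 0 ≤ ⌊Real.logb (3/2) t2⌋ % 3 := Int.emod_nonneg _ (by norm_num)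
    have hval : (⌊Real.logb (3/2) t1⌋ % 3).toNat = (⌊Real.logb (3/2) t2⌋ % 3).toNat :=
      congrArg Fin.val hcol
    omega
  -- logb bounds
  have hlow : Real.logb (3/2) t1 + 1 ≤ Real.logb (3/2) t2 := by
    have := Real.logb_le_logb_of_le hb (by positivity : (0:ℝ) < 3/2 * t1) h1
    rwa [Real.logb_mul (by norm_num) (ne_of_gt ht1), Real.logb_self_eq_one hb,
      add_comm] at this
  have hhigh : Real.logb (3/2) t2 ≤ Real.logb (3/2) t1 + 2 := by
    have h94 : (9/4 : ℝ) * t1 = (3/2) * ((3/2) * t1) := by ring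
    have := Real.logb_le_logb_of_le hb ht2 (h94 ▸ h2)
    rw [Real.logb_mul (by norm_num) (by positivity),
      Real.logb_mul (by norm_num) (ne_of_gt ht1), Real.logb_self_eq_one hb] at this
    linarith
  have f1 : ⌊Real.logb (3/2) t1⌋ + 1 ≤ ⌊Real.logb (3/2) t2⌋ := by
    have := Int.floor_le_floor hlow
    rwa [Int.floor_add_one] at this
  have f2 : ⌊Real.logb (3/2) t2⌋ ≤ ⌊Real.logb (3/2) t1⌋ + 2 := by
    have := Int.floor_le_floor hhigh
    rwa [show (2:ℝ) = ((2:ℤ):ℝ) by norm_num, Int.floor_add_intCast] at this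
  omega

lemma build {S P : ℕ → ℝ} {col : Fin 4}
    (hS : ∀ k, nucol (S k) = col) (hP : ∀ k, nucol (P k) = col)
    (hgood : ∀ᶠ k in atTop, 0 < S k ∧ S k ≠ 4 ∧ 0 < P k ∧ P k ≠ 4)
    (hratio : Tendsto (fun k => |wfun (P k)| / |wfun (S k)|) atTop (𝓝 2)) : False := by
  have hIoo : ∀ᶠ k in atTop, |wfun (P k)| / |wfun (S k)| ∈ Set.Ioo (8/5 : ℝ) (11/5) :=
    hratio (Ioo_mem_nhds (by norm_num) (by norm_num))
  obtain ⟨k, ⟨hS0, hS4, hP0, hP4⟩, hr1, hr2⟩ := (hgood.and hIoo).exists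
  have hws : (0:ℝ) < |wfun (S k)| := abs_pos.2 (wfun_ne_zero hS0 hS4)
  have heq : |wfun (P k)| = |wfun (P k)| / |wfun (S k)| * |wfun (S k)| :=
    (div_mul_cancel₀ _ (ne_of_gt hws)).symm
  refine key hS0 hS4 hP0 hP4 ((hS k).trans (hP k).symm) ?_ ?_
  · rw [heq]; nlinarith
  · rw [heq]; nlinarith

/-- There exists a finite colouring `ν` of the positive reals such that there is no
injective sequence `(x_n)` of positive reals, bounded above and bounded away from zero,
with all the numbers `x_n + x_m` and `x_n * x_m` (for `n < m`) of the same colour. -/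
theorem stmt_5 :
    ∃ (r : ℕ) (ν : ℝ → Fin r),
      ¬ ∃ (x : ℕ → ℝ) (col : Fin r),
        Function.Injective x ∧
        (∃ c C : ℝ, 0 < c ∧ ∀ n, c ≤ x n ∧ x n ≤ C) ∧
        (∀ n m, n < m → ν (x n + x m) = col ∧ ν (x n * x m) = col) := by
  refine ⟨4, nucol, ?_⟩
  rintro ⟨x, col, hinj, ⟨c, C, hc, hbd⟩, hmono⟩
  obtain ⟨a, haIcc, φ, hφ, hconv⟩ := tendsto_subseq_of_bounded (Metric.isBounded_Icc c C)
      (fun n => Set.mem_Icc.2 ⟨(hbd n).1, (hbd n).2⟩)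
  rw [isClosed_Icc.closure_eq] at haIcc
  have ha : 0 < a := lt_of_lt_of_le hc haIcc.1
  set z : ℕ → ℝ := x ∘ φ with hz
  have hzinj : Function.Injective z := hinj.comp hφ.injective
  have hsub : ∃ ψ : ℕ → ℕ, StrictMono ψ ∧ ((∀ k, a < z (ψ k)) ∨ (∀ k, z (ψ k) < a)) := by
    by_cases h1 : ∃ᶠ k in atTop, a < z k
    · obtain ⟨ψ, h, h'⟩ := extraction_of_frequently_atTop h1; exact ⟨ψ, h, Or.inl h'⟩
    by_cases h2 : ∃ᶠ k in atTop, z k < a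
    · obtain ⟨ψ, h, h'⟩ := extraction_of_frequently_atTop h2; exact ⟨ψ, h, Or.inr h'⟩
    · exfalso
      rw [not_frequently] at h1 h2
      have hev : ∀ᶠ k in atTop, z k = a := by
        filter_upwards [h1, h2] with k hk1 hk2
        push_neg at hk1 hk2; linarith
      obtain ⟨N, hN⟩ := eventually_atTop.1 hev
      exact Nat.succ_ne_self N (hzinj ((hN (N+1) (by omega)).trans (hN N le_rfl).symm))
  obtain ⟨ψ, hψ, hsgn⟩ := hsub
  set y : ℕ → ℝ := z ∘ ψ with hy
  have hytend : Tendsto y atTop (𝓝 a) := hconv.comp hψ.tendsto_atTop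
  have hypos : ∀ k, 0 < y k := fun k => lt_of_lt_of_le hc (hbd _).1
  have hsign : ∀ k l, 0 < (y k - a) * (y l - a) := by
    rcases hsgn with h | h
    · intro k l
      have h1 := h k; have h2 := h l
      have e1 : 0 < y k - a := by simpa [hy] using sub_pos.2 h1
      have e2 : 0 < y l - a := by simpa [hy] using sub_pos.2 h2
      exact mul_pos e1 e2
    · intro k l
      have h1 := h k; have h2 := h l
      have e1 : y k - a < 0 := by simpa [hy] using sub_neg.2 h1
      have e2 : y l - a < 0 := by simpa [hy] using sub_neg.2 h2
      exact mul_pos_of_neg_of_neg e1 e2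
  have hcol : ∀ k, nucol (y k + y (k+1)) = col ∧ nucol (y k * y (k+1)) = col :=
    fun k => hmono (φ (ψ k)) (φ (ψ (k+1))) (hφ (hψ (Nat.lt_succ_self k)))
  set S : ℕ → ℝ := fun k => y k + y (k+1) with hSdef
  set P : ℕ → ℝ := fun k => y k * y (k+1) with hPdef
  have hy1 : Tendsto (fun k => y (k+1)) atTop (𝓝 a) := hytend.comp (tendsto_add_atTop_nat 1)
  have hSt : Tendsto S atTop (𝓝 (a + a)) := hytend.add hy1
  have hPt : Tendsto P atTop (𝓝 (a * a)) := hytend.mul hy1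
  have hSpos : ∀ k, 0 < S k := fun k => add_pos (hypos k) (hypos (k+1))
  have hPpos : ∀ k, 0 < P k := fun k => mul_pos (hypos k) (hypos (k+1))
  have hwcont : ∀ {b : ℝ}, b ≠ 0 → ContinuousAt wfun b := by
    intro b hb
    have h1 : ContinuousAt Real.log (b / 4) := Real.continuousAt_log (div_ne_zero hb (by norm_num))
    have h2 : ContinuousAt (fun u : ℝ => Real.log (u / 4)) b :=
      ContinuousAt.comp (g := Real.log) (f := fun u : ℝ => u / 4) h1
        (continuousAt_id.div_const 4)
    exact h2.div_const _
  by_cases hA : a = 2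
  · -- limit 2 case
    subst hA
    set ε : ℕ → ℝ := fun k => y k - 2 with hεdef
    have hεne : ∀ k, ε k ≠ 0 := by
      intro k h
      have := hsign k k
      rw [show y k - 2 = ε k from rfl, h] at this
      simp at this
    have hεt : Tendsto ε atTop (𝓝 0) := by
      have := hytend.sub_const 2
      simpa using this
    set δ : ℕ → ℝ := fun k => ε k + ε (k+1) with hδdef
    set ρ : ℕ → ℝ := fun k => 2 * δ k + ε k * ε (k+1) with hρdef
    have hSδ : ∀ k, S k = 4 + δ k := fun k => by simp [hSdef, hδdef, hεdef]; ring
    have hPρ : ∀ k, P k = 4 + ρ k := fun k => by simp [hPdef, hρdef, hδdef, hεdef]; ring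
    have hδne : ∀ k, δ k ≠ 0 := by
      intro k h
      rcases mul_pos_iff.1 (hsign k (k+1)) with ⟨e1, e2⟩ | ⟨e1, e2⟩ <;>
        · simp only [hδdef, hεdef] at h; linarith
    have habs : ∀ k, |ε (k+1)| ≤ |δ k| := by
      intro k
      rcases mul_pos_iff.1 (hsign k (k+1)) with ⟨e1, e2⟩ | ⟨e1, e2⟩
      · rw [abs_of_pos e2, abs_of_pos (by simp only [hδdef, hεdef]; linarith)]
        simp only [hδdef, hεdef]; linarith
      · rw [abs_of_neg e2, abs_of_neg (by simp only [hδdef, hεdef]; linarith)]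
        simp only [hδdef, hεdef]; linarith
    have hρδ : Tendsto (fun k => ρ k / δ k) atTop (𝓝 2) := by
      rw [← tendsto_sub_nhds_zero_iff]
      rw [tendsto_zero_iff_abs_tendsto_zero]
      apply squeeze_zero (fun k => abs_nonneg _) (g := fun k => |ε k|)
      · intro k
        have h1 : ρ k / δ k - 2 = ε k * ε (k+1) / δ k := by
          field_simp [hδne k]
          ring
        rw [h1, abs_div, abs_mul]
        have hd : (0:ℝ) < |δ k| := abs_pos.2 (hδne k)
        calc |ε k| * |ε (k+1)| / |δ k| ≤ |ε k| * |δ k| / |δ k| := by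
              exact (div_le_div_iff_of_pos_right hd).2
                (mul_le_mul_of_nonneg_left (habs k) (abs_nonneg (ε k)))
          _ = |ε k| := by field_simp
      · simpa using hεt.abs
    have hρne : ∀ᶠ k in atTop, ρ k ≠ 0 := by
      filter_upwards [hρδ.eventually_ne (by norm_num : (2:ℝ) ≠ 0)] with k hk h0
      exact hk (by rw [h0, zero_div])
    have hS4 : ∀ k, S k ≠ 4 := by
      intro k h
      exact hδne k (by have := hSδ k; linarith)
    have hslope : Tendsto (slope Real.log 1) (𝓝[≠] (1:ℝ)) (𝓝 1) := by
      have := hasDerivAt_iff_tendsto_slope.1 (Real.hasDerivAt_log one_ne_zero)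
      simpa using this
    have hSdiv : Tendsto (fun k => S k / 4) atTop (𝓝[≠] (1:ℝ)) := by
      rw [tendsto_nhdsWithin_iff]
      constructor
      · have := hSt.div_const 4
        norm_num at this
        exact this
      · refine Eventually.of_forall fun k => ?_
        simp only [Set.mem_compl_iff, Set.mem_singleton_iff]
        intro h
        exact hS4 k (by rw [div_eq_one_iff_eq (by norm_num : (4:ℝ) ≠ 0)] at h; exact h)
    have hPdiv : Tendsto (fun k => P k / 4) atTop (𝓝[≠] (1:ℝ)) := by
      rw [tendsto_nhdsWithin_iff]
      constructor
      · have := hPt.div_const 4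
        norm_num at this
        exact this
      · filter_upwards [hρne] with k hk
        simp only [Set.mem_compl_iff, Set.mem_singleton_iff]
        intro h
        rw [div_eq_one_iff_eq (by norm_num : (4:ℝ) ≠ 0)] at h
        exact hk (by have := hPρ k; linarith)
    set q : ℕ → ℝ := fun k => slope Real.log 1 (S k / 4) with hqdef
    set q' : ℕ → ℝ := fun k => slope Real.log 1 (P k / 4) with hq'def
    have hq : Tendsto q atTop (𝓝 1) := hslope.comp hSdiv
    have hq' : Tendsto q' atTop (𝓝 1) := hslope.comp hPdiv
    have hwS : ∀ k, wfun (S k) = q k * δ k / (4 * Real.log 2) := by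
      intro k
      have h4 : S k / 4 - 1 ≠ 0 := by
        intro h
        exact hS4 k (by have : S k / 4 = 1 := by linarith
                        rw [div_eq_one_iff_eq (by norm_num : (4:ℝ) ≠ 0)] at this; exact this)
      have hlog : Real.log (S k / 4) = q k * (S k / 4 - 1) := by
        rw [hqdef]; simp only [slope_def_field, Real.log_one, sub_zero]
        rw [div_mul_cancel₀ _ h4]
      show Real.log (S k / 4) / Real.log 2 = _
      rw [hlog]
      have h5 : S k / 4 - 1 = δ k / 4 := by rw [hSδ k]; ring
      rw [h5]; ring
    have hwP : ∀ k, ρ k ≠ 0 → wfun (P k) = q' k * ρ k / (4 * Real.log 2) := by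
      intro k hk
      have h4 : P k / 4 - 1 ≠ 0 := by
        intro h
        have : P k = 4 := by
          have : P k / 4 = 1 := by linarith
          rw [div_eq_one_iff_eq (by norm_num : (4:ℝ) ≠ 0)] at this; exact this
        exact hk (by have := hPρ k; linarith)
      have hlog : Real.log (P k / 4) = q' k * (P k / 4 - 1) := by
        rw [hq'def]; simp only [slope_def_field, Real.log_one, sub_zero]
        rw [div_mul_cancel₀ _ h4]
      show Real.log (P k / 4) / Real.log 2 = _
      rw [hlog]
      have h5 : P k / 4 - 1 = ρ k / 4 := by rw [hPρ k]; ring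
      rw [h5]; ring
    have hlog2 : Real.log 2 ≠ 0 := Real.log_ne_zero_of_pos_of_ne_one (by norm_num) (by norm_num)
    have hcalc : ∀ᶠ k in atTop,
        (|q' k| / |q k|) * |ρ k / δ k| = |wfun (P k)| / |wfun (S k)| := by
      filter_upwards [hρne] with k hρk
      rw [hwS k, hwP k hρk]
      have h3 : |4 * Real.log 2| ≠ 0 := abs_ne_zero.2 (by positivity)
      rw [abs_div (ρ k), abs_div, abs_div, abs_mul (q' k), abs_mul (q k), div_div_div_comm,
        div_self h3, div_one, div_mul_div_comm]
    have hratio : Tendsto (fun k => |wfun (P k)| / |wfun (S k)|) atTop (𝓝 2) := by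
      have hT : Tendsto (fun k => (|q' k| / |q k|) * |ρ k / δ k|) atTop
          (𝓝 ((|1| / |1|) * |2|)) := ((hq'.abs).div (hq.abs) (by norm_num)).mul hρδ.abs
      norm_num at hT
      exact hT.congr' hcalc
    refine build (fun k => (hcol k).1) (fun k => (hcol k).2) ?_ hratio
    filter_upwards [hρne] with k hρk
    exact ⟨hSpos k, hS4 k, hPpos k, fun h =>
      hρk (by linarith [hPρ k, h, show P k = y k * y (k+1) from rfl])⟩
  · -- limit ≠ 2 case
    have hS4lim : a + a ≠ 4 := fun h => hA (by linarith)
    have hP4lim : a * a ≠ 4 := by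
      intro h
      have h0 : (a - 2) * (a + 2) = 0 := by linarith [h]
      rcases mul_eq_zero.1 h0 with h' | h'
      · exact hA (by linarith)
      · linarith
    have hwS : Tendsto (fun k => wfun (S k)) atTop (𝓝 (wfun (a + a))) :=
      (hwcont (by positivity)).tendsto.comp hSt
    have hwP : Tendsto (fun k => wfun (P k)) atTop (𝓝 (wfun (a * a))) :=
      (hwcont (by positivity)).tendsto.comp hPt
    have hkey : wfun (a * a) = 2 * wfun (a + a) := by
      show Real.log (a * a / 4) / Real.log 2 = _
      have e : a * a / 4 = ((a + a) / 4) * ((a + a) / 4) := by ring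
      rw [e, Real.log_mul (by positivity) (by positivity)]
      show _ = 2 * (Real.log ((a+a)/4) / Real.log 2)
      ring
    have hne : |wfun (a + a)| ≠ 0 := abs_ne_zero.2 (wfun_ne_zero (by positivity) hS4lim)
    have hratio : Tendsto (fun k => |wfun (P k)| / |wfun (S k)|) atTop (𝓝 2) := by
      have hT := (hwP.abs).div (hwS.abs) hne
      have : |wfun (a * a)| / |wfun (a + a)| = 2 := by
        rw [hkey, abs_mul]
        rw [mul_div_assoc, div_self hne]
        norm_num
      rwa [this] at hT
    refine build (fun k => (hcol k).1) (fun k => (hcol k).2) ?_ hratio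
    filter_upwards [hSt.eventually_ne hS4lim, hPt.eventually_ne hP4lim] with k h1 h2
    exact ⟨hSpos k, h1, hPpos k, h2⟩
end

section
/- Let U be an open subset of the positive reals and let (x_n)_{n≥1} be a sequence of positive reals with x_n ∈ U for all n and x_n → 0. Then there exists a strictly decreasing subsequence (y_n)_{n≥1} of (x_n)_{n≥1} such that every finite sum ∑_{i∈F} y_i, over every finite nonempty set F of indices, lies in U. -/
/-!
Choose the terms one at a time. Once finitely many terms are chosen with all their nonempty
subset sums in `U`, those finitely many sums have a common radius of room inside the open set
`U`; since `x n → 0`, some later term smaller than all previous ones fits into that room and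
lies in `U` itself, so the new subset sums stay in `U` as well.
-/

open Filter Topology Finset

theorem exists_seq_of_forall_finset_exists_insert {α : Type*} [DecidableEq α]
    {P : Finset α → Prop} {r : α → α → Prop} (h₀ : P ∅)
    (h : ∀ I, P I → ∃ m, P (insert m I) ∧ ∀ i ∈ I, r i m) :
    ∃ n : ℕ → α, (∀ k, P ((range k).image n)) ∧ ∀ j k, j < k → r (n j) (n k) := by
  have : Nonempty α := let ⟨m, _⟩ := h ∅ h₀; ⟨m⟩
  choose! next hnext using h
  let I : ℕ → Finset α := fun k => Nat.rec ∅ (fun _ J => insert (next J) J) k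
  have hI : ∀ k, I k = (range k).image (fun j => next (I j)) := by
    intro k
    induction k with
    | zero => rfl
    | succ k ih =>
      rw [range_add_one, image_insert, ← ih]
  have hP : ∀ k, P (I k) := by
    intro k
    induction k with
    | zero => exact h₀
    | succ k ih => exact (hnext _ ih).1
  refine ⟨fun k => next (I k), fun k => hI k ▸ hP k, fun j k hjk => ?_⟩
  have hj : next (I j) ∈ I k := by
    rw [hI k]
    exact mem_image_of_mem _ (mem_range.2 hjk)
  exact (hnext _ (hP k)).2 _ hj

section SubsetSums

variable {ι M : Type*} [AddCommMonoid M]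

def SubsetSumsIn (x : ι → M) (U : Set M) (I : Finset ι) : Prop :=
  ∀ F ⊆ I, F.Nonempty → ∑ i ∈ F, x i ∈ U

theorem subsetSumsIn_empty (x : ι → M) (U : Set M) : SubsetSumsIn x U ∅ := by
  intro F hF hne
  rw [subset_empty.1 hF] at hne
  exact absurd hne not_nonempty_empty

variable [TopologicalSpace M] [ContinuousAdd M] [DecidableEq ι]

theorem SubsetSumsIn.eventually_insert {x : ι → M} {U : Set M} {I : Finset ι} {l : Filter ι}
    (hI : SubsetSumsIn x U I) (hU : IsOpen U) (hxU : ∀ᶠ m in l, x m ∈ U)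
    (hlim : Tendsto x l (𝓝 0)) : ∀ᶠ m in l, SubsetSumsIn x U (insert m I) := by
  have hshift : ∀ F ∈ I.powerset, ∀ᶠ m in l, F.Nonempty → ∑ i ∈ F, x i + x m ∈ U := by
    intro F hF
    by_cases hne : F.Nonempty
    · have hsum : Tendsto (fun m => ∑ i ∈ F, x i + x m) l (𝓝 (∑ i ∈ F, x i)) := by
        simpa using tendsto_const_nhds.add hlim
      exact (hsum.eventually (hU.mem_nhds (hI F (mem_powerset.1 hF) hne))).mono fun _ h _ => h
    · exact Eventually.of_forall fun _ h => absurd h hne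
  filter_upwards [hxU, (eventually_all_finset _).2 hshift] with m hm hshift_m F hF hne
  rw [subset_insert_iff] at hF
  by_cases hmF : m ∈ F
  · rw [← add_sum_erase F x hmF, add_comm]
    rcases (F.erase m).eq_empty_or_nonempty with hempty | hne'
    · rw [hempty, sum_empty, zero_add]
      exact hm
    · exact hshift_m _ (mem_powerset.2 hF) hne'
  · rw [erase_eq_of_notMem hmF] at hF
    exact hI F hF hne

end SubsetSums

/-- If `U` is an open subset of the positive reals and `(x_n)` is a sequence of elements
of `U` tending to `0`, then there is a strictly decreasing subsequence all of whose
finite sums lie in `U`. -/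
theorem stmt_9 (U : Set ℝ) (hU : IsOpen U) (hUpos : U ⊆ Set.Ioi 0)
    (x : ℕ → ℝ) (hx : ∀ n, x n ∈ U)
    (hlim : Filter.Tendsto x Filter.atTop (nhds 0)) :
    ∃ n : ℕ → ℕ, StrictMono n ∧ StrictAnti (fun k => x (n k)) ∧
      ∀ F : Finset ℕ, F.Nonempty → (∑ i ∈ F, x (n i)) ∈ U := by
  have hstep : ∀ I, SubsetSumsIn x U I →
      ∃ m, SubsetSumsIn x U (insert m I) ∧ ∀ i ∈ I, i < m ∧ x m < x i := by
    intro I hI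
    have hlater : ∀ i ∈ I, ∀ᶠ m in atTop, i < m ∧ x m < x i := fun i _ =>
      (eventually_gt_atTop i).and (hlim.eventually (gt_mem_nhds (hUpos (hx i))))
    exact ((hI.eventually_insert hU (Eventually.of_forall hx) hlim).and
      ((eventually_all_finset I).2 hlater)).exists
  obtain ⟨n, hsums, hn⟩ :=
    exists_seq_of_forall_finset_exists_insert (subsetSumsIn_empty x U) hstep
  have hmono : StrictMono n := fun j k hjk => (hn j k hjk).1
  refine ⟨n, hmono, fun j k hjk => (hn j k hjk).2, fun F hF => ?_⟩
  obtain ⟨k, hFk⟩ := F.exists_nat_subset_range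
  rw [← sum_image fun i _ j _ h => hmono.injective h]
  exact hsums k _ (image_subset_image hFk) (hF.image n)
end

section
/- There does not exist an injective sequence (x_n)_{n≥1} of positive reals such that for all pairs n ≠ m both x_n + x_m and x_n · x_m belong to the set C₃ = {2^k + 2^l : k, l ∈ ℤ, l < k}. -/
/-!
Every term is rational, since `x n = ((x n + x m) + (x n + x p) - (x m + x p)) / 2`. Write a
positive rational as `2 ^ v * u` with `u` its odd part. The odd part of an element of `C₃` is
`1 + 2 ^ d` with `d ≥ 1`, so `u n * u m = 1 + 2 ^ d` whenever `n ≠ m`. If `u n = u m`, then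
`1 + 2 ^ d` is a square, which forces `u n = 3`; and for `a < b` the odd part of
`3 * 2 ^ a + 3 * 2 ^ b` is `3 * (1 + 2 ^ (b - a))`, of the form `1 + 2 ^ d` only if `b = a + 1`.
Hence at most two terms have odd part `3`, since their valuations would be pairwise adjacent.
The remaining odd parts are pairwise distinct, and there are at most three of them: the product
`(1 + 2 ^ α) * (1 + 2 ^ β)` determines `{α, β}`, so comparing `(u a * u b) * (u c * u e)` with
`(u a * u c) * (u b * u e)` gives `u b = u c` or `u a = u e`. So there are at most five terms.
-/

theorem two_pow_add_two_pow_add_two_pow_mem_Ioc {a b : ℕ} (ha : 0 < a) (hb : 0 < b) :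
    2 ^ a + 2 ^ b + 2 ^ (a + b) ∈ Set.Ioc (2 ^ (a + b)) (2 ^ (a + b + 1)) := by
  have h₁ : 2 ^ a ≤ 2 ^ (a + b - 1) := Nat.pow_le_pow_right two_pos (by omega)
  have h₂ : 2 ^ b ≤ 2 ^ (a + b - 1) := Nat.pow_le_pow_right two_pos (by omega)
  have h₃ : 2 ^ (a + b) = 2 * 2 ^ (a + b - 1) := by rw [← pow_succ']; congr 1; omega
  have h₄ : 2 ^ (a + b + 1) = 2 * 2 ^ (a + b) := by ring
  exact ⟨Nat.lt_add_of_pos_left (by positivity), by linarith⟩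

theorem eq_or_eq_of_one_add_two_pow_mul_eq {a b c e : ℕ} (ha : 0 < a) (hb : 0 < b)
    (hc : 0 < c) (he : 0 < e) (h : (1 + 2 ^ a) * (1 + 2 ^ b) = (1 + 2 ^ c) * (1 + 2 ^ e)) :
    a = c ∨ a = e := by
  -- The size of the sum pins down `a + b = c + e`; then `2 ^ a, 2 ^ b` and `2 ^ c, 2 ^ e` have the
  -- same sum and the same product, so they are the roots of the same quadratic.
  have h' : 2 ^ a + 2 ^ b + 2 ^ (a + b) = 2 ^ c + 2 ^ e + 2 ^ (c + e) := by
    have expand : ∀ m n : ℕ, (1 + 2 ^ m) * (1 + 2 ^ n) = 1 + (2 ^ m + 2 ^ n + 2 ^ (m + n)) := by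
      intro m n; ring
    simpa only [expand, Nat.add_left_cancel_iff] using h
  have hsum : a + b = c + e := by
    obtain ⟨h₁, h₂⟩ := two_pow_add_two_pow_add_two_pow_mem_Ioc ha hb
    obtain ⟨h₃, h₄⟩ := two_pow_add_two_pow_add_two_pow_mem_Ioc hc he
    rw [← h'] at h₃ h₄
    have := (Nat.pow_lt_pow_iff_right (by norm_num : 1 < 2)).1 (h₁.trans_le h₄)
    have := (Nat.pow_lt_pow_iff_right (by norm_num : 1 < 2)).1 (h₃.trans_le h₂)
    omega
  have hz : ((2 : ℤ) ^ a - 2 ^ c) * (2 ^ a - 2 ^ e) = 0 := by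
    have hs : ((2 : ℤ) ^ a + 2 ^ b) = 2 ^ c + 2 ^ e := by
      rw [hsum] at h'; exact_mod_cast Nat.add_right_cancel h'
    have hp : (2 : ℤ) ^ a * 2 ^ b = 2 ^ c * 2 ^ e := by rw [← pow_add, ← pow_add, hsum]
    linear_combination 2 ^ a * hs - hp
  obtain h' | h' := mul_eq_zero.1 hz
  · exact .inl (Nat.pow_right_injective le_rfl (by exact_mod_cast sub_eq_zero.1 h'))
  · exact .inr (Nat.pow_right_injective le_rfl (by exact_mod_cast sub_eq_zero.1 h'))

theorem eq_one_of_two_pow_add_two_eq_two_pow {i j : ℕ} (h : 2 ^ i + 2 = 2 ^ j) : i = 1 := by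
  have := Nat.one_le_two_pow (n := i)
  rcases i with _ | _ | i <;> rcases j with _ | _ | j <;>
    simp only [pow_zero, pow_succ] at * <;> omega

theorem eq_three_of_one_add_two_pow_eq_sq {d t : ℕ} (h : 1 + 2 ^ d = t ^ 2) : t = 3 := by
  have ht : 1 ≤ t := by nlinarith [Nat.one_le_two_pow (n := d)]
  have hprod : (t - 1) * (t + 1) = 2 ^ d := by
    zify [ht] at h ⊢; linear_combination -h
  obtain ⟨i, -, hi⟩ := (Nat.dvd_prime_pow Nat.prime_two).1 (Dvd.intro _ hprod)
  obtain ⟨j, -, hj⟩ := (Nat.dvd_prime_pow Nat.prime_two).1 (Dvd.intro_left _ hprod)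
  have := eq_one_of_two_pow_add_two_eq_two_pow (i := i) (j := j) (by omega)
  subst this; omega

theorem eq_one_of_three_mul_one_add_two_pow_eq {g d : ℕ} (h : 3 * (1 + 2 ^ g) = 1 + 2 ^ d) :
    g = 1 := by
  have := Nat.one_le_two_pow (n := g)
  rcases g with _ | _ | g <;> rcases d with _ | _ | d <;>
    simp only [pow_zero, pow_succ] at * <;> omega

def C₃ (K : Type*) [DivisionRing K] : Set K := {x | ∃ k l : ℤ, l < k ∧ x = 2 ^ k + 2 ^ l}

theorem C₃_subset_range_ratCast {K : Type*} [Field K] [CharZero K] :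
    C₃ K ⊆ Set.range ((↑) : ℚ → K) := by
  rintro _ ⟨k, l, -, rfl⟩
  exact ⟨2 ^ k + 2 ^ l, by push_cast; rfl⟩

theorem ratCast_mem_C₃ {K : Type*} [Field K] [CharZero K] {q : ℚ} :
    (q : K) ∈ C₃ K ↔ q ∈ C₃ ℚ :=
  exists₂_congr fun k l => and_congr_right' <| by
    rw [← Rat.cast_inj (α := K)]; push_cast; rfl

theorem mem_range_ratCast_of_add_mem {K : Type*} [Field K] [CharZero K] {a b c : K}
    (hab : a + b ∈ Set.range ((↑) : ℚ → K)) (hac : a + c ∈ Set.range ((↑) : ℚ → K))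
    (hbc : b + c ∈ Set.range ((↑) : ℚ → K)) : a ∈ Set.range ((↑) : ℚ → K) := by
  obtain ⟨r, hr⟩ := hab
  obtain ⟨s, hs⟩ := hac
  obtain ⟨t, ht⟩ := hbc
  exact ⟨(r + s - t) / 2, by push_cast; rw [hr, hs, ht]; ring⟩

noncomputable def oddPart (q : ℚ) : ℚ := q / 2 ^ padicValRat 2 q

theorem two_zpow_padicValRat_mul_oddPart (q : ℚ) : 2 ^ padicValRat 2 q * oddPart q = q :=
  mul_div_cancel₀ q (zpow_ne_zero _ two_ne_zero)

theorem eq_of_oddPart_eq_of_padicValRat_eq {x y : ℚ} (h : oddPart x = oddPart y)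
    (hv : padicValRat 2 x = padicValRat 2 y) : x = y := by
  rw [← two_zpow_padicValRat_mul_oddPart x, ← two_zpow_padicValRat_mul_oddPart y, h, hv]

theorem oddPart_pos {q : ℚ} (hq : 0 < q) : 0 < oddPart q := by
  unfold oddPart; positivity

theorem oddPart_mul {q r : ℚ} (hq : q ≠ 0) (hr : r ≠ 0) :
    oddPart (q * r) = oddPart q * oddPart r := by
  simp only [oddPart, padicValRat.mul hq hr, zpow_add₀ (two_ne_zero' ℚ)]
  ring

theorem oddPart_two_zpow_mul (z : ℤ) {q : ℚ} (hq : q ≠ 0) : oddPart (2 ^ z * q) = oddPart q := by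
  have h2 : padicValRat 2 (2 ^ z) = z := by
    rw [padicValRat.zpow, show padicValRat 2 2 = 1 from padicValRat.self one_lt_two, mul_one]
  rw [oddPart_mul (zpow_ne_zero _ two_ne_zero) hq, oddPart, h2,
    div_self (zpow_ne_zero _ two_ne_zero), one_mul]

theorem oddPart_natCast {n : ℕ} (hn : Odd n) : oddPart n = n := by
  rw [oddPart, padicValRat.of_nat, padicValNat.eq_zero_of_not_dvd hn.not_two_dvd_nat]
  simp

theorem exists_oddPart_eq_of_mem_C₃ {x : ℚ} (hx : x ∈ C₃ ℚ) :
    ∃ d : ℕ, 0 < d ∧ oddPart x = 1 + 2 ^ d := by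
  obtain ⟨k, l, hlk, rfl⟩ := hx
  obtain ⟨d, rfl⟩ : ∃ d : ℕ, k = l + d := ⟨(k - l).toNat, by omega⟩
  have hodd : Odd (1 + 2 ^ d) := (Nat.even_pow.2 ⟨even_two, by omega⟩).one_add
  have : (2 : ℚ) ^ (l + d) + 2 ^ l = 2 ^ l * ((1 + 2 ^ d : ℕ) : ℚ) := by
    rw [zpow_add₀ two_ne_zero, zpow_natCast]; push_cast; ring
  refine ⟨d, by omega, ?_⟩
  rw [this, oddPart_two_zpow_mul _ (by positivity), oddPart_natCast hodd]
  push_cast; rfl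

theorem exists_oddPart_mul_oddPart_eq {x y : ℚ} (hx : x ≠ 0) (hy : y ≠ 0) (h : x * y ∈ C₃ ℚ) :
    ∃ d : ℕ, 0 < d ∧ oddPart x * oddPart y = 1 + 2 ^ d :=
  oddPart_mul hx hy ▸ exists_oddPart_eq_of_mem_C₃ h

theorem eq_three_of_mul_self_eq_one_add_two_pow {u : ℚ} {d : ℕ} (hu : 0 < u)
    (h : u * u = 1 + 2 ^ d) : u = 3 := by
  obtain ⟨t, ht⟩ := (Rat.isSquare_natCast_iff (n := 1 + 2 ^ d)).1 ⟨u, by push_cast; exact h.symm⟩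
  obtain rfl := eq_three_of_one_add_two_pow_eq_sq (ht.trans (sq t).symm)
  have h9 : u * u = 3 * 3 := by rw [h]; exact_mod_cast ht
  nlinarith

theorem oddPart_eq_three_of_oddPart_eq {x y : ℚ} (hx : 0 < x) (hy : 0 < y) (h : x * y ∈ C₃ ℚ)
    (hxy : oddPart x = oddPart y) : oddPart x = 3 := by
  obtain ⟨d, -, hd⟩ := exists_oddPart_mul_oddPart_eq hx.ne' hy.ne' h
  rw [← hxy] at hd
  exact eq_three_of_mul_self_eq_one_add_two_pow (oddPart_pos hx) hd

theorem padicValRat_eq_add_one_of_oddPart_eq_three {x y : ℚ} (hx : oddPart x = 3)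
    (hy : oddPart y = 3) (hlt : padicValRat 2 x < padicValRat 2 y) (h : x + y ∈ C₃ ℚ) :
    padicValRat 2 y = padicValRat 2 x + 1 := by
  obtain ⟨g, hg⟩ : ∃ g : ℕ, padicValRat 2 y = padicValRat 2 x + g :=
    ⟨(padicValRat 2 y - padicValRat 2 x).toNat, by omega⟩
  have hodd : Odd (3 * (1 + 2 ^ g)) :=
    (by decide : Odd 3).mul (Nat.even_pow.2 ⟨even_two, by omega⟩).one_add
  have hsum : x + y = 2 ^ padicValRat 2 x * ((3 * (1 + 2 ^ g) : ℕ) : ℚ) := by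
    calc x + y = 2 ^ padicValRat 2 x * oddPart x + 2 ^ padicValRat 2 y * oddPart y := by
          rw [two_zpow_padicValRat_mul_oddPart, two_zpow_padicValRat_mul_oddPart]
      _ = _ := by rw [hx, hy, hg, zpow_add₀ two_ne_zero, zpow_natCast]; push_cast; ring
  obtain ⟨d, -, hd⟩ := exists_oddPart_eq_of_mem_C₃ h
  rw [hsum, oddPart_two_zpow_mul _ (by positivity), oddPart_natCast hodd] at hd
  have := eq_one_of_three_mul_one_add_two_pow_eq (by exact_mod_cast hd)
  omega

open Finset

section Family

variable {ι : Type*} {q : ι → ℚ}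

theorem oddPart_eq_or_oddPart_eq (hpos : ∀ i, 0 < q i) (hmul : ∀ i j, i ≠ j → q i * q j ∈ C₃ ℚ)
    {a b c e : ι} (hab : a ≠ b) (hce : c ≠ e) (hac : a ≠ c) (hbe : b ≠ e) :
    oddPart (q b) = oddPart (q c) ∨ oddPart (q a) = oddPart (q e) := by
  have hne : ∀ i, q i ≠ 0 := fun i => (hpos i).ne'
  obtain ⟨d₁, hd₁, h₁⟩ := exists_oddPart_mul_oddPart_eq (hne a) (hne b) (hmul a b hab)
  obtain ⟨d₂, hd₂, h₂⟩ := exists_oddPart_mul_oddPart_eq (hne c) (hne e) (hmul c e hce)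
  obtain ⟨d₃, hd₃, h₃⟩ := exists_oddPart_mul_oddPart_eq (hne a) (hne c) (hmul a c hac)
  obtain ⟨d₄, hd₄, h₄⟩ := exists_oddPart_mul_oddPart_eq (hne b) (hne e) (hmul b e hbe)
  have key : (1 + 2 ^ d₁) * (1 + 2 ^ d₂) = (1 + 2 ^ d₃) * (1 + 2 ^ d₄) := by
    have : ((1 + 2 ^ d₁) * (1 + 2 ^ d₂) : ℚ) = (1 + 2 ^ d₃) * (1 + 2 ^ d₄) := by
      rw [← h₁, ← h₂, ← h₃, ← h₄]; ring
    exact_mod_cast this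
  rcases eq_or_eq_of_one_add_two_pow_mul_eq hd₁ hd₂ hd₃ hd₄ key with rfl | rfl
  · exact .inl (mul_left_cancel₀ (oddPart_pos (hpos a)).ne' (h₁.trans h₃.symm))
  · exact .inr <| mul_right_cancel₀ (oddPart_pos (hpos b)).ne'
      (h₁.trans (h₄.symm.trans (mul_comm _ _)))

theorem card_filter_oddPart_ne_three_le [Fintype ι] (hpos : ∀ i, 0 < q i)
    (hmul : ∀ i j, i ≠ j → q i * q j ∈ C₃ ℚ) : #{i | oddPart (q i) ≠ 3} ≤ 3 := by
  classical
  set S : Finset ι := {i | oddPart (q i) ≠ 3}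
  have hdist : ∀ i ∈ S, ∀ j, i ≠ j → oddPart (q i) ≠ oddPart (q j) := fun i hi j hij h =>
    (mem_filter.1 hi).2 (oddPart_eq_three_of_oddPart_eq (hpos i) (hpos j) (hmul i j hij) h)
  by_contra! hcard
  obtain ⟨a, ha⟩ : S.Nonempty := card_pos.1 (by omega)
  obtain ⟨b, hb, c, hc, e, he, hbc, hbe, hce⟩ :=
    two_lt_card.1 (by rw [card_erase_of_mem ha]; omega : 2 < #(S.erase a))
  obtain ⟨hba, hbS⟩ := mem_erase.1 hb
  obtain ⟨hca, -⟩ := mem_erase.1 hc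
  obtain ⟨hea, -⟩ := mem_erase.1 he
  rcases oddPart_eq_or_oddPart_eq hpos hmul hba.symm hce hca.symm hbe with h | h
  · exact hdist b hbS c hbc h
  · exact hdist a ha e hea.symm h

theorem card_filter_oddPart_eq_three_le [Fintype ι] (hinj : Function.Injective q)
    (hadd : ∀ i j, i ≠ j → q i + q j ∈ C₃ ℚ) : #{i | oddPart (q i) = 3} ≤ 2 := by
  by_contra! hcard
  obtain ⟨a, ha, b, hb, c, hc, hab, hac, hbc⟩ := two_lt_card.1 hcard
  simp only [mem_filter, mem_univ, true_and] at ha hb hc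
  set v : ι → ℤ := fun i => padicValRat 2 (q i)
  have hv : ∀ {i j}, oddPart (q i) = 3 → oddPart (q j) = 3 → i ≠ j → v i ≠ v j :=
    fun hi hj hij h => hij (hinj (eq_of_oddPart_eq_of_padicValRat_eq (hi.trans hj.symm) h))
  have hadj : ∀ {i j}, oddPart (q i) = 3 → oddPart (q j) = 3 → v i < v j → v j = v i + 1 :=
    fun {i j} hi hj hlt => padicValRat_eq_add_one_of_oddPart_eq_three hi hj hlt
      (hadd i j (by rintro rfl; exact hlt.false))
  have := hv ha hb hab
  have := hv ha hc hac
  have := hv hb hc hbc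
  have := hadj ha hb
  have := hadj hb ha
  have := hadj ha hc
  have := hadj hc ha
  have := hadj hb hc
  have := hadj hc hb
  omega

theorem card_le_five_of_pairwise_mem_C₃ [Fintype ι] (hinj : Function.Injective q)
    (hpos : ∀ i, 0 < q i) (hadd : ∀ i j, i ≠ j → q i + q j ∈ C₃ ℚ)
    (hmul : ∀ i j, i ≠ j → q i * q j ∈ C₃ ℚ) :
    Fintype.card ι ≤ 5 := by
  have h := card_filter_add_card_filter_not (s := univ) (fun i => oddPart (q i) = 3)
  simp only [← ne_eq, card_univ] at h
  have := card_filter_oddPart_eq_three_le hinj hadd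
  have := card_filter_oddPart_ne_three_le hpos hmul
  omega

end Family

/-- There is no injective sequence `(x_n)` of positive reals such that for all `n ≠ m`
both `x_n + x_m` and `x_n * x_m` lie in `C₃ = {2^k + 2^l : k, l ∈ ℤ, l < k}`. -/
theorem stmt_13 :
    ¬ ∃ x : ℕ → ℝ,
      Function.Injective x ∧ (∀ n, 0 < x n) ∧
      (∀ n m, n ≠ m →
        (∃ k l : ℤ, l < k ∧ x n + x m = (2 : ℝ) ^ k + (2 : ℝ) ^ l) ∧
        (∃ k l : ℤ, l < k ∧ x n * x m = (2 : ℝ) ^ k + (2 : ℝ) ^ l)) := by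
  rintro ⟨x, hinj, hpos, hrel⟩
  have hadd (n m : ℕ) (h : n ≠ m) : x n + x m ∈ C₃ ℝ := (hrel n m h).1
  have hmul (n m : ℕ) (h : n ≠ m) : x n * x m ∈ C₃ ℝ := (hrel n m h).2
  have hrat (n : ℕ) : x n ∈ Set.range ((↑) : ℚ → ℝ) :=
    mem_range_ratCast_of_add_mem (C₃_subset_range_ratCast (hadd n (n + 1) (by omega)))
      (C₃_subset_range_ratCast (hadd n (n + 2) (by omega)))
      (C₃_subset_range_ratCast (hadd (n + 1) (n + 2) (by omega)))
  choose q hq using hrat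
  have := card_le_five_of_pairwise_mem_C₃ (q := fun i : Fin 6 => q i)
    (fun i j h => Fin.ext (hinj (by simp only [← hq, h])))
    (fun i => Rat.cast_pos.1 ((hq i).symm ▸ hpos i))
    (fun i j h => (ratCast_mem_C₃ (K := ℝ)).1 <| by
      push_cast [hq]; exact hadd i j (Fin.val_injective.ne h))
    (fun i j h => (ratCast_mem_C₃ (K := ℝ)).1 <| by
      push_cast [hq]; exact hmul i j (Fin.val_injective.ne h))
  simp at this
end

section
/- There does not exist an injective sequence (x_n)_{n≥1} of positive reals such that for all pairs n ≠ m both x_n + x_m and x_n · x_m belong to the set C₅ = {2^{k+1} · (1 − 2^{l−k})^{1/2} : k, l ∈ ℤ, l < k}. -/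
open Filter

/-- Membership in the set C₅. -/
private def inC (c : ℝ) : Prop :=
  ∃ k l : ℤ, l < k ∧ c = (2 : ℝ) ^ (k + 1) * Real.sqrt (1 - (2 : ℝ) ^ (l - k))

private lemma two_zpow_pos (n : ℤ) : (0:ℝ) < 2 ^ n := zpow_pos (by norm_num) n

/-- Squares of C₅ elements: `c² = 2^a − 2^b` with `a` even, `b < a`,
and `2^(a−1) ≤ c² < 2^a`. -/
private lemma inC_sq {c : ℝ} (h : inC c) :
    ∃ a b : ℤ, Even a ∧ b < a ∧ c ^ 2 = 2 ^ a - 2 ^ b ∧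
      (2:ℝ) ^ (a - 1) ≤ c ^ 2 ∧ c ^ 2 < 2 ^ a ∧ 0 < c := by
  obtain ⟨k, l, hlk, rfl⟩ := h
  have h2 : (2:ℝ) ≠ 0 := two_ne_zero
  have hε_pos : (0:ℝ) < (2:ℝ) ^ (l - k) := two_zpow_pos _
  have hε_le : (2:ℝ) ^ (l - k) ≤ (2:ℝ) ^ (-1 : ℤ) :=
    zpow_le_zpow_right₀ one_le_two (by omega)
  have hε_half : (2:ℝ) ^ (l - k) ≤ 1/2 := by
    rw [show ((2:ℝ)) ^ (-1 : ℤ) = 1/2 from by norm_num] at hε_le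
    exact hε_le
  have e1 : (2:ℝ) ^ (k+1) * (2:ℝ) ^ (k+1) = 2 ^ (2*k+2) := by
    rw [← zpow_add₀ h2]; congr 1; ring
  have e2 : (2:ℝ) ^ (2*k+2) * (2:ℝ) ^ (l-k) = 2 ^ (k+l+2) := by
    rw [← zpow_add₀ h2]; congr 1; ring
  have hsq : ((2:ℝ) ^ (k + 1) * Real.sqrt (1 - (2:ℝ) ^ (l - k))) ^ 2
      = 2 ^ (2*k+2) - 2 ^ (k+l+2) := by
    calc ((2:ℝ) ^ (k + 1) * Real.sqrt (1 - (2:ℝ) ^ (l - k))) ^ 2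
        = ((2:ℝ)^(k+1) * (2:ℝ)^(k+1)) * (1 - (2:ℝ)^(l-k)) := by
          rw [mul_pow, Real.sq_sqrt (by linarith)]; ring
      _ = 2^(2*k+2) - 2^(2*k+2) * (2:ℝ)^(l-k) := by rw [e1]; ring
      _ = 2^(2*k+2) - 2^(k+l+2) := by rw [e2]
  have hbig : (2:ℝ) ^ (k+l+2) ≤ 2 ^ (2*k+1) :=
    zpow_le_zpow_right₀ one_le_two (by omega)
  have hdouble : (2:ℝ) ^ (2*k+2) = 2 ^ (2*k+1) * 2 := by
    rw [← zpow_add_one₀ h2]; congr 1; ring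
  refine ⟨2*k + 2, k + l + 2, ⟨k+1, by ring⟩, by omega, hsq, ?_, ?_, ?_⟩
  · have : (2*k+2) - 1 = 2*k+1 := by ring
    rw [hsq, this]; linarith
  · rw [hsq]; linarith [two_zpow_pos (k+l+2)]
  · exact mul_pos (two_zpow_pos _) (Real.sqrt_pos.mpr (by linarith))

/-- Two C₅ elements whose squares are within a factor 2 have the same `a`. -/
private lemma class_eq {a a' : ℤ} {s s' : ℝ} (ea : Even a) (ea' : Even a')
    (h1 : (2:ℝ) ^ (a-1) ≤ s) (h2 : s < 2 ^ a)
    (h1' : (2:ℝ) ^ (a'-1) ≤ s') (h2' : s' < 2 ^ a')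
    (hle : s ≤ s') (hlt : s' < 2 * s) : a = a' := by
  have hA : a - 1 < a' := by
    rw [← zpow_lt_zpow_iff_right₀ (one_lt_two (α := ℝ))]
    exact lt_of_le_of_lt (le_trans h1 hle) h2'
  have hA' : a' - 1 < a + 1 := by
    rw [← zpow_lt_zpow_iff_right₀ (one_lt_two (α := ℝ))]
    have h3 : (2:ℝ) ^ (a+1) = 2 ^ a * 2 := by rw [← zpow_add_one₀ two_ne_zero]
    calc (2:ℝ)^(a'-1) ≤ s' := h1'
      _ < 2 * s := hlt
      _ < 2 * 2^a := by linarith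
      _ = 2^(a+1) := by rw [h3]; ring
  obtain ⟨r, hr⟩ := ea; obtain ⟨r', hr'⟩ := ea'
  omega

/-- No power of 2 lies in C₅. -/
private lemma not_inC_zpow (m : ℤ) : ¬ inC ((2:ℝ) ^ m) := by
  intro h
  obtain ⟨a, b, ea, hba, heq, hlb, hub, hpos⟩ := inC_sq h
  have hsq : ((2:ℝ) ^ m) ^ 2 = 2 ^ (m + m) := by
    rw [sq, ← zpow_add₀ (two_ne_zero)]
  rw [hsq] at hlb hub
  have h1 : a - 1 ≤ m + m := by
    have := (zpow_le_zpow_iff_right₀ (one_lt_two (α := ℝ))).mp hlb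
    omega
  have h2 : m + m < a := (zpow_lt_zpow_iff_right₀ (one_lt_two (α := ℝ))).mp hub
  obtain ⟨r, hr⟩ := ea
  omega

/-- Key lemma: if infinitely many (pairwise distinct) C₅ elements converge to `c > 0`,
then `c` is a power of 2. -/
private lemma keyK {c : ℝ} (hc : 0 < c) {z : ℕ → ℝ}
    (hinj : Function.Injective z) (hmem : ∀ j, inC (z j))
    (hlim : Tendsto z atTop (nhds c)) : ∃ m : ℤ, c = 2 ^ m := by
  choose a b ea hba heq hlb hub hposz using fun j => inC_sq (hmem j)
  obtain ⟨N, hN⟩ := (Metric.tendsto_atTop.mp hlim) (c/10) (by positivity)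
  have hwin : ∀ j, N ≤ j → (9/10)*c < z j ∧ z j < (11/10)*c := by
    intro j hj
    have := hN j hj
    rw [Real.dist_eq, abs_lt] at this
    constructor <;> linarith [this.1, this.2]
  have hsame : ∀ j, N ≤ j → a j = a N := by
    have key : ∀ j j', N ≤ j → N ≤ j' → z j ≤ z j' → a j = a j' := by
      intro j j' hj hj' hle
      obtain ⟨w1, w2⟩ := hwin j hj
      obtain ⟨w1', w2'⟩ := hwin j' hj'
      refine class_eq (ea j) (ea j') (hlb j) (hub j) (hlb j') (hub j') ?_ ?_
      · nlinarith [hposz j, hposz j']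
      · nlinarith [hposz j, hposz j']
    intro j hj
    rcases le_total (z j) (z N) with h | h
    · exact key j N hj le_rfl h
    · exact (key N j le_rfl hj h).symm
  have hbval : ∀ j, N ≤ j → (2:ℝ) ^ (b j) = 2 ^ (a N) - (z j) ^ 2 := by
    intro j hj
    have h1 := heq j
    rw [hsame j hj] at h1
    linarith
  have hsqlim : Tendsto (fun j => (2:ℝ) ^ (a N) - (z j) ^ 2) atTop
      (nhds ((2:ℝ) ^ (a N) - c ^ 2)) :=
    tendsto_const_nhds.sub (hlim.pow 2)
  have hge : (0:ℝ) ≤ 2 ^ (a N) - c ^ 2 := by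
    refine ge_of_tendsto hsqlim ?_
    filter_upwards [eventually_ge_atTop N] with j hj
    rw [← hbval j hj]
    exact (two_zpow_pos (b j)).le
  rcases eq_or_lt_of_le hge with hzero | hpos2
  · obtain ⟨r, hr⟩ := ea N
    refine ⟨r, ?_⟩
    have h1 : c ^ 2 = ((2:ℝ) ^ r) ^ 2 := by
      rw [sq ((2:ℝ)^r), ← zpow_add₀ (two_ne_zero : (2:ℝ) ≠ 0), ← hr]
      linarith
    have h2 : (0:ℝ) < 2 ^ r := two_zpow_pos r
    nlinarith
  · set h : ℝ := 2 ^ (a N) - c ^ 2 with hh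
    obtain ⟨M0, hM0⟩ := (Metric.tendsto_atTop.mp hsqlim) (h/3) (by positivity)
    set M : ℕ := max N M0 with hM
    have hwin2 : ∀ j, M ≤ j → (2/3)*h < (2:ℝ) ^ (b j) ∧ (2:ℝ) ^ (b j) < (4/3)*h := by
      intro j hj
      have h1 := hM0 j (le_trans (le_max_right N M0) hj)
      rw [Real.dist_eq, abs_lt] at h1
      rw [hbval j (le_trans (le_max_left N M0) hj)]
      constructor <;> linarith [h1.1, h1.2]
    have hbne : b M ≠ b (M+1) := by
      intro hbe
      have e1 : (2:ℝ) ^ (b M) = 2 ^ (b (M+1)) := by rw [hbe]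
      rw [hbval M (le_max_left N M0), hbval (M+1) (le_trans (le_max_left N M0) (by omega))] at e1
      have e2 : z M = z (M+1) := by nlinarith [hposz M, hposz (M+1)]
      exact (by omega : M ≠ M + 1) (hinj e2)
    have contra : ∀ p q : ℕ, M ≤ p → M ≤ q → b p < b q → False := by
      intro p q hp hq hlt
      have h1 : (2:ℝ) ^ (b p + 1) ≤ 2 ^ (b q) :=
        zpow_le_zpow_right₀ one_le_two (by omega)
      rw [zpow_add_one₀ (two_ne_zero : (2:ℝ) ≠ 0)] at h1
      obtain ⟨wp1, wp2⟩ := hwin2 p hp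
      obtain ⟨wq1, wq2⟩ := hwin2 q hq
      linarith
    rcases lt_or_gt_of_ne hbne with hlt | hgt
    · exact absurd (contra M (M+1) le_rfl (by omega) hlt) (by simp)
    · exact absurd (contra (M+1) M (by omega) le_rfl hgt) (by simp)

/-- There is no injective sequence `(x_n)` of positive reals such that for all `n ≠ m`
both `x_n + x_m` and `x_n * x_m` lie in
`C₅ = {2^(k+1) * √(1 - 2^(l-k)) : k, l ∈ ℤ, l < k}`. -/
theorem stmt_14 :
    ¬ ∃ x : ℕ → ℝ,
      Function.Injective x ∧ (∀ n, 0 < x n) ∧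
      (∀ n m, n ≠ m →
        (∃ k l : ℤ, l < k ∧
          x n + x m = (2 : ℝ) ^ (k + 1) * Real.sqrt (1 - (2 : ℝ) ^ (l - k))) ∧
        (∃ k l : ℤ, l < k ∧
          x n * x m = (2 : ℝ) ^ (k + 1) * Real.sqrt (1 - (2 : ℝ) ^ (l - k)))) := by
  rintro ⟨x, hinj, hpos, hpair⟩
  have hmem_add : ∀ n m, n ≠ m → inC (x n + x m) := fun n m h => (hpair n m h).1
  have hmem_mul : ∀ n m, n ≠ m → inC (x n * x m) := fun n m h => (hpair n m h).2
  by_cases hbdd : ∃ B, ∀ n, x n ≤ B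
  · -- bounded case
    obtain ⟨B, hB⟩ := hbdd
    have hxmem : ∀ n, x n ∈ Set.Icc (0:ℝ) B := fun n => ⟨(hpos n).le, hB n⟩
    obtain ⟨A, -, φ, hφ, hφlim⟩ :=
      tendsto_subseq_of_bounded (Metric.isBounded_Icc (0:ℝ) B) hxmem
    have hA0 : 0 ≤ A := ge_of_tendsto' hφlim (fun i => (hpos (φ i)).le)
    have hyinj : Function.Injective (x ∘ φ) := hinj.comp hφ.injective
    -- each x (φ i) + A is a power of 2
    have hpow : ∀ i, ∃ m : ℤ, x (φ i) + A = 2 ^ m := by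
      intro i
      have hzlim : Tendsto (fun j => x (φ i) + (x ∘ φ) (j + (i+1))) atTop
          (nhds (x (φ i) + A)) :=
        tendsto_const_nhds.add (hφlim.comp (tendsto_add_atTop_nat (i+1)))
      refine keyK (add_pos_of_pos_of_nonneg (hpos _) hA0) ?_ ?_ hzlim
      · intro j j' hjj'
        have : (x ∘ φ) (j + (i+1)) = (x ∘ φ) (j' + (i+1)) := by
          simpa using hjj'
        have := hyinj this
        omega
      · intro j
        exact hmem_add (φ i) (φ (j + (i+1))) (hφ.injective.ne (by omega))
    choose m hm using hpow
    rcases hA0.lt_or_eq with hApos | hAzero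
    · -- A > 0 : two distinct powers of 2 too close
      have hlim2 : Tendsto (fun i => (x ∘ φ) i + A) atTop (nhds (A + A)) :=
        hφlim.add_const A
      obtain ⟨N, hN⟩ := (Metric.tendsto_atTop.mp hlim2) ((2*A)/3) (by positivity)
      have hwin : ∀ i, N ≤ i → (4/3)*A < (2:ℝ) ^ (m i) ∧ (2:ℝ) ^ (m i) < (8/3)*A := by
        intro i hi
        have h1 := hN i hi
        rw [Real.dist_eq, abs_lt] at h1
        rw [← hm i]
        constructor <;> · simp only [Function.comp] at h1; linarith [h1.1, h1.2]
      have hmne : m N ≠ m (N+1) := by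
        intro hme
        have : x (φ N) + A = x (φ (N+1)) + A := by rw [hm N, hm (N+1), hme]
        have : (x ∘ φ) N = (x ∘ φ) (N+1) := by simpa using this
        exact (by omega : N ≠ N + 1) (hyinj this)
      have contra : ∀ p q : ℕ, N ≤ p → N ≤ q → m p < m q → False := by
        intro p q hp hq hlt
        have h1 : (2:ℝ) ^ (m p + 1) ≤ 2 ^ (m q) :=
          zpow_le_zpow_right₀ one_le_two (by omega)
        rw [zpow_add_one₀ (two_ne_zero : (2:ℝ) ≠ 0)] at h1
        obtain ⟨wp1, wp2⟩ := hwin p hp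
        obtain ⟨wq1, wq2⟩ := hwin q hq
        linarith
      rcases lt_or_gt_of_ne hmne with hlt | hgt
      · exact contra N (N+1) le_rfl (by omega) hlt
      · exact contra (N+1) N (by omega) le_rfl hgt
    · -- A = 0 : all points are powers of 2, product is a power of 2 in C₅
      have hy0 : x (φ 0) = 2 ^ (m 0) := by have := hm 0; rw [← hAzero] at this; linarith
      have hy1 : x (φ 1) = 2 ^ (m 1) := by have := hm 1; rw [← hAzero] at this; linarith
      have hprod : inC (x (φ 0) * x (φ 1)) :=
        hmem_mul (φ 0) (φ 1) (hφ.injective.ne (by omega))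
      rw [hy0, hy1, ← zpow_add₀ (two_ne_zero : (2:ℝ) ≠ 0)] at hprod
      exact not_inC_zpow _ hprod
  · -- unbounded case
    push_neg at hbdd
    obtain ⟨n1, hn1⟩ := hbdd (x 0)
    obtain ⟨n2, hn2⟩ := hbdd (2 * x n1)
    obtain ⟨n3, hn3⟩ := hbdd (3 * x n2)
    have h0 : 0 < x 0 := hpos 0
    have h1 : 0 < x n1 := hpos n1
    have h2 : 0 < x n2 := hpos n2
    have h3 : 0 < x n3 := hpos n3
    have ne03 : (0:ℕ) ≠ n3 := by
      intro h; apply (ne_of_lt (show x 0 < x n3 by linarith)); rw [h]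
    have ne13 : n1 ≠ n3 := by
      intro h; apply (ne_of_lt (show x n1 < x n3 by linarith)); rw [h]
    have ne23 : n2 ≠ n3 := by
      intro h; apply (ne_of_lt (show x n2 < x n3 by linarith)); rw [h]
    obtain ⟨a1, b1, ea1, hba1, heq1, hlb1, hub1, hpos1⟩ := inC_sq (hmem_add 0 n3 ne03)
    obtain ⟨a2, b2, ea2, hba2, heq2, hlb2, hub2, hpos2⟩ := inC_sq (hmem_add n1 n3 ne13)
    obtain ⟨a3, b3, ea3, hba3, heq3, hlb3, hub3, hpos3⟩ := inC_sq (hmem_add n2 n3 ne23)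
    -- orderings of the sums and their squares
    have hs12 : (x 0 + x n3) ^ 2 < (x n1 + x n3) ^ 2 := by nlinarith
    have hs23 : (x n1 + x n3) ^ 2 < (x n2 + x n3) ^ 2 := by nlinarith
    have hratio13 : (x n2 + x n3) ^ 2 < 2 * (x 0 + x n3) ^ 2 := by nlinarith
    -- all in the same class
    have e13 : a1 = a3 :=
      class_eq ea1 ea3 hlb1 hub1 hlb3 hub3 (by linarith) hratio13
    have e12 : a1 = a2 :=
      class_eq ea1 ea2 hlb1 hub1 hlb2 hub2 (by linarith) (by linarith)
    rw [← e12] at heq2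
    rw [← e13] at heq3
    -- b ordering
    have hb21 : b2 < b1 := by
      rw [← zpow_lt_zpow_iff_right₀ (one_lt_two (α := ℝ))]
      linarith
    have hb32 : b3 < b2 := by
      rw [← zpow_lt_zpow_iff_right₀ (one_lt_two (α := ℝ))]
      linarith
    -- contradiction between the two estimates
    have k1 : (2:ℝ) ^ b2 ≤ 2 ^ (b1 - 1) := zpow_le_zpow_right₀ one_le_two (by omega)
    have k2 : (2:ℝ) ^ b1 = 2 ^ (b1 - 1) * 2 := by
      rw [← zpow_add_one₀ (two_ne_zero : (2:ℝ) ≠ 0)]; congr 1; ring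
    have k3 : (0:ℝ) < 2 ^ b3 := two_zpow_pos b3
    -- (w+t)² − (u+t)² = 2^b1 − 2^b3 < 2·(2^b1 − 2^b2) = 2·((v+t)² − (u+t)²)
    have key1 : (x n2 + x n3) ^ 2 - (x 0 + x n3) ^ 2
        < 2 * ((x n1 + x n3) ^ 2 - (x 0 + x n3) ^ 2) := by
      rw [heq1, heq2, heq3]
      linarith
    have key2 : 2 * ((x n1 + x n3) ^ 2 - (x 0 + x n3) ^ 2)
        < (x n2 + x n3) ^ 2 - (x 0 + x n3) ^ 2 := by
      nlinarith [sq_nonneg (x n1 - x 0), sq_nonneg (x n1 + x n3 - (x 0 + x n3))]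
    linarith
end

section
/- If x < y < z are three positive real numbers such that each of x + y, x + z and y + z belongs to the set C₃ = {2^k + 2^l : k, l ∈ ℤ, l < k}, then x, y and z are dyadic rationals, i.e. each of them can be written as m / 2^j with m ∈ ℤ and j ∈ ℕ. -/
private lemma dy_pow (k : ℤ) : ∃ (m : ℤ) (j : ℕ), (2 : ℝ) ^ k = (m : ℝ) / 2 ^ j := by
  rcases le_or_gt 0 k with h | h
  · refine ⟨2 ^ k.toNat, 0, ?_⟩
    push_cast
    rw [← zpow_natCast, Int.toNat_of_nonneg h]
    simp
  · refine ⟨1, (-k).toNat, ?_⟩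
    rw [Int.cast_one, eq_div_iff (by positivity)]
    rw [← zpow_natCast, Int.toNat_of_nonneg (by omega), ← zpow_add₀ (two_ne_zero)]
    simp

private lemma dy_add {a b : ℝ} (ha : ∃ (m : ℤ) (j : ℕ), a = (m : ℝ) / 2 ^ j)
    (hb : ∃ (m : ℤ) (j : ℕ), b = (m : ℝ) / 2 ^ j) :
    ∃ (m : ℤ) (j : ℕ), a + b = (m : ℝ) / 2 ^ j := by
  obtain ⟨m, j, rfl⟩ := ha
  obtain ⟨n, i, rfl⟩ := hb
  refine ⟨m * 2 ^ i + n * 2 ^ j, j + i, ?_⟩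
  push_cast
  rw [div_add_div _ _ (by positivity) (by positivity), pow_add]
  ring

private lemma dy_sub {a b : ℝ} (ha : ∃ (m : ℤ) (j : ℕ), a = (m : ℝ) / 2 ^ j)
    (hb : ∃ (m : ℤ) (j : ℕ), b = (m : ℝ) / 2 ^ j) :
    ∃ (m : ℤ) (j : ℕ), a - b = (m : ℝ) / 2 ^ j := by
  obtain ⟨m, j, rfl⟩ := ha
  obtain ⟨n, i, rfl⟩ := hb
  refine ⟨m * 2 ^ i - n * 2 ^ j, j + i, ?_⟩
  push_cast
  field_simp
  ring

private lemma dy_half {a : ℝ} (ha : ∃ (m : ℤ) (j : ℕ), a = (m : ℝ) / 2 ^ j) :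
    ∃ (m : ℤ) (j : ℕ), a / 2 = (m : ℝ) / 2 ^ j := by
  obtain ⟨m, j, rfl⟩ := ha
  exact ⟨m, j + 1, by rw [pow_succ]; ring⟩

/-- If `0 < x < y < z` are reals with `x + y`, `x + z`, `y + z` all in
`C₃ = {2^k + 2^l : k, l ∈ ℤ, l < k}`, then `x`, `y`, `z` are dyadic rationals. -/
theorem stmt_15 (x y z : ℝ) (hx : 0 < x) (hxy : x < y) (hyz : y < z)
    (h1 : ∃ k l : ℤ, l < k ∧ x + y = (2 : ℝ) ^ k + (2 : ℝ) ^ l)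
    (h2 : ∃ k l : ℤ, l < k ∧ x + z = (2 : ℝ) ^ k + (2 : ℝ) ^ l)
    (h3 : ∃ k l : ℤ, l < k ∧ y + z = (2 : ℝ) ^ k + (2 : ℝ) ^ l) :
    (∃ (m : ℤ) (j : ℕ), x = (m : ℝ) / 2 ^ j) ∧
    (∃ (m : ℤ) (j : ℕ), y = (m : ℝ) / 2 ^ j) ∧
    (∃ (m : ℤ) (j : ℕ), z = (m : ℝ) / 2 ^ j) := by
  obtain ⟨k1, l1, -, e1⟩ := h1
  obtain ⟨k2, l2, -, e2⟩ := h2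
  obtain ⟨k3, l3, -, e3⟩ := h3
  have d1 : ∃ (m : ℤ) (j : ℕ), x + y = (m : ℝ) / 2 ^ j := e1 ▸ dy_add (dy_pow k1) (dy_pow l1)
  have d2 : ∃ (m : ℤ) (j : ℕ), x + z = (m : ℝ) / 2 ^ j := e2 ▸ dy_add (dy_pow k2) (dy_pow l2)
  have d3 : ∃ (m : ℤ) (j : ℕ), y + z = (m : ℝ) / 2 ^ j := e3 ▸ dy_add (dy_pow k3) (dy_pow l3)
  have hx' : x = ((x + y) + (x + z) - (y + z)) / 2 := by ring
  have hy' : y = ((x + y) + (y + z) - (x + z)) / 2 := by ring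
  have hz' : z = ((x + z) + (y + z) - (x + y)) / 2 := by ring
  exact ⟨hx' ▸ dy_half (dy_sub (dy_add d1 d2) d3),
         hy' ▸ dy_half (dy_sub (dy_add d1 d3) d2),
         hz' ▸ dy_half (dy_sub (dy_add d2 d3) d1)⟩
end

section
/- Let q₁, q₂, q₃, q₄ be positive rational numbers such that √q₁ + √q₂ + √q₃ + √q₄ is rational. Then each of √q₁, √q₂, √q₃, √q₄ is rational (i.e. each qᵢ is the square of a rational number). -/
/-!
Suppose some `√qⱼ` were irrational. Its minimal polynomial over `ℚ` is then `X² - qⱼ`, so there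
is a `ℚ`-embedding `φ` of `ℚ(√q₁, …, √q₄)` into `ℝ` with `φ √qⱼ = -√qⱼ`. Every `φ √qᵢ` is
`±√qᵢ ≤ √qᵢ`, with strict inequality at `j`, so `φ` cannot fix the rational number `∑ √qᵢ`.
-/

open Polynomial IntermediateField

section SquareRoot

variable {K L : Type*} [Field K] [Field L] [Algebra K L] {x : L} {q : K}

theorem minpoly_dvd_X_sq_sub_C (hx : x ^ 2 = algebraMap K L q) : minpoly K x ∣ X ^ 2 - C q :=
  minpoly.dvd K x (by simp [hx])

theorem isIntegral_of_sq_eq_algebraMap (hx : x ^ 2 = algebraMap K L q) : IsIntegral K x :=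
  ⟨X ^ 2 - C q, monic_X_pow_sub_C q two_ne_zero, by simp [hx]⟩

theorem splits_map_minpoly_of_sq_eq_algebraMap (hx : x ^ 2 = algebraMap K L q) :
    ((minpoly K x).map (algebraMap K L)).Splits := by
  have hfactor : (X ^ 2 - C q).map (algebraMap K L) = (X - C x) * (X - C (-x)) := by
    rw [Polynomial.map_sub, Polynomial.map_pow, map_X, map_C, ← hx, C_pow, C_neg]
    ring
  refine Splits.of_dvd ?_ (Polynomial.map_ne_zero (monic_X_pow_sub_C q two_ne_zero).ne_zero)
    (Polynomial.map_dvd _ (minpoly_dvd_X_sq_sub_C hx))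
  rw [hfactor]
  exact (Splits.X_sub_C x).mul (Splits.X_sub_C (-x))

theorem minpoly_eq_X_sq_sub_C (hx : x ^ 2 = algebraMap K L q)
    (hirr : x ∉ (algebraMap K L).range) : minpoly K x = X ^ 2 - C q := by
  have hint := isIntegral_of_sq_eq_algebraMap hx
  refine (eq_of_monic_of_dvd_of_natDegree_le (minpoly.monic hint)
    (monic_X_pow_sub_C q two_ne_zero) (minpoly_dvd_X_sq_sub_C hx) ?_).symm
  rw [natDegree_X_pow_sub_C]
  exact (minpoly.two_le_natDegree_iff hint).mpr hirr

theorem aeval_neg_minpoly_of_sq_eq_algebraMap (hx : x ^ 2 = algebraMap K L q)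
    (hirr : x ∉ (algebraMap K L).range) : aeval (-x) (minpoly K x) = 0 := by
  simp [minpoly_eq_X_sq_sub_C hx hirr, hx]

theorem AlgHom.apply_eq_or_eq_neg_of_sq_eq_algebraMap {A : Type*} [Ring A] [Algebra K A]
    (φ : A →ₐ[K] L) {a : A} (ha : a ^ 2 = algebraMap K A q) (hx : x ^ 2 = algebraMap K L q) :
    φ a = x ∨ φ a = -x :=
  sq_eq_sq_iff_eq_or_eq_neg.mp (by rw [← map_pow, ha, AlgHom.commutes, hx])

end SquareRoot

theorem mem_range_of_sum_mem_range_of_sq_mem_range {K L ι : Type*} [Field K] [Field L]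
    [LinearOrder L] [IsStrictOrderedRing L] [Algebra K L] [Fintype ι] (x : ι → L)
    (hx_nonneg : ∀ i, 0 ≤ x i) (hx_sq : ∀ i, x i ^ 2 ∈ (algebraMap K L).range)
    (hsum : ∑ i, x i ∈ (algebraMap K L).range) (j : ι) : x j ∈ (algebraMap K L).range := by
  by_contra hirr
  choose q hq using hx_sq
  let y (i : ι) : adjoin K (Set.range x) := ⟨x i, subset_adjoin K _ (Set.mem_range_self i)⟩
  have hK : ∀ z ∈ Set.range x,
      IsIntegral K z ∧ ((minpoly K z).map (algebraMap K L)).Splits := by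
    rintro _ ⟨i, rfl⟩
    exact ⟨isIntegral_of_sq_eq_algebraMap (hq i).symm,
      splits_map_minpoly_of_sq_eq_algebraMap (hq i).symm⟩
  obtain ⟨φ, hφ⟩ := exists_algHom_adjoin_of_splits_of_aeval hK (y j).2
    (aeval_neg_minpoly_of_sq_eq_algebraMap (hq j).symm hirr)
  have hle (i : ι) : φ (y i) ≤ x i := by
    have hy_sq : y i ^ 2 = algebraMap K _ (q i) := Subtype.ext (hq i).symm
    rcases φ.apply_eq_or_eq_neg_of_sq_eq_algebraMap hy_sq (hq i).symm with h | h <;>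
      linarith [hx_nonneg i]
  have hlt : φ (y j) < x j := by
    have hpos : 0 < x j := (hx_nonneg j).lt_of_ne' fun h ↦ hirr ⟨0, by rw [h, map_zero]⟩
    rw [show φ (y j) = -x j from hφ]
    linarith
  obtain ⟨r, hr⟩ := hsum
  have hfix : ∑ i, φ (y i) = ∑ i, x i := by
    have hy_sum : ∑ i, y i = algebraMap K _ r := Subtype.ext (by simpa [y] using hr.symm)
    rw [← map_sum, hy_sum, AlgHom.commutes, hr]
  exact (Finset.sum_lt_sum (fun i _ ↦ hle i) ⟨j, Finset.mem_univ j, hlt⟩).ne hfix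

/-- If `q₁, q₂, q₃, q₄` are positive rationals with `√q₁ + √q₂ + √q₃ + √q₄` rational,
then each `√qᵢ` is rational. -/
theorem stmt_16 (q₁ q₂ q₃ q₄ : ℚ) (h₁ : 0 < q₁) (h₂ : 0 < q₂) (h₃ : 0 < q₃) (h₄ : 0 < q₄)
    (h : ∃ s : ℚ,
      Real.sqrt q₁ + Real.sqrt q₂ + Real.sqrt q₃ + Real.sqrt q₄ = (s : ℝ)) :
    (∃ s : ℚ, Real.sqrt q₁ = (s : ℝ)) ∧ (∃ s : ℚ, Real.sqrt q₂ = (s : ℝ)) ∧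
    (∃ s : ℚ, Real.sqrt q₃ = (s : ℝ)) ∧ (∃ s : ℚ, Real.sqrt q₄ = (s : ℝ)) := by
  set q := ![q₁, q₂, q₃, q₄]
  have hq : ∀ i, 0 ≤ (q i : ℝ) := by
    intro i; fin_cases i <;> simp [q, h₁.le, h₂.le, h₃.le, h₄.le]
  have hrat := mem_range_of_sum_mem_range_of_sq_mem_range (K := ℚ)
    (fun i ↦ Real.sqrt (q i)) (fun i ↦ Real.sqrt_nonneg _)
    (fun i ↦ ⟨q i, by rw [eq_ratCast, Real.sq_sqrt (hq i)]⟩)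
    (by obtain ⟨s, hs⟩ := h; exact ⟨s, by simpa [q, Fin.sum_univ_four] using hs.symm⟩)
  have hsqrt (i : Fin 4) : ∃ s : ℚ, Real.sqrt (q i) = s := by
    obtain ⟨s, hs⟩ := hrat i
    exact ⟨s, by rw [← hs, eq_ratCast]⟩
  exact ⟨hsqrt 0, hsqrt 1, hsqrt 2, hsqrt 3⟩
end
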